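/- arXiv:2109.12341 — 7 statements merged into one kernel-verified Lean document; each statement's English description precedes it below -/
import Mathlib

section
/- Let P be a parafree group and let N be a normal subgroup of P such that the quotient P/N is also a parafree group of the same abelian rank as P. Then N is trivial. -/
/-- A finitely generated group is *parafree* if it is residually nilpotent (the
intersection of its lower central series is trivial) and it has the same lower central
quotients as some finitely generated free group.  Here `lowerCentralSeries G k` is
`γ_{k+1} G`. -/
def IsParafree (G : Type*) [Group G] : Prop :=
  Group.FG G ∧ (⨅ n : ℕ, (⊤ : Subgroup G).lowerCentralSeries n) = ⊥ ∧
    ∃ n : ℕ, ∀ k : ℕ,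
      Nonempty ((G ⧸ (⊤ : Subgroup G).lowerCentralSeries k) ≃*
        (FreeGroup (Fin n) ⧸ (⊤ : Subgroup (FreeGroup (Fin n))).lowerCentralSeries k))

/-- The abelian rank of a group: the minimal number of generators of its
abelianization. -/
noncomputable def abelianRank (G : Type*) [Group G] : ℕ :=
  sInf {n : ℕ | ∃ s : Finset (Abelianization G),
    s.card = n ∧ Subgroup.closure (s : Set (Abelianization G)) = ⊤}

/-- An element is a proper power if it is `y ^ n` for some `n ≥ 2`. -/
def IsProperPower {A : Type*} [Monoid A] (x : A) : Prop :=
  ∃ (y : A) (n : ℕ), 2 ≤ n ∧ x = y ^ n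

/-!
Equal abelian ranks force `P` and `P ⧸ N` to share the lower central quotients of one free
group `F` of rank `n`. For every `k` the projection induces a surjection
`P ⧸ γₖ P → (P ⧸ N) ⧸ γₖ (P ⧸ N)` between two copies of the free nilpotent group `F ⧸ γₖ F`,
which is Hopfian; so it is injective, `N ≤ γₖ P` for all `k`, and residual nilpotence of `P`
gives `N = 1`.

Hopficity of `F ⧸ γₖ F`: lift a surjective endomorphism to `f : F →* F`. It is surjective on
the finitely generated free abelian group `Fᵃᵇ`, hence bijective there, so some `g : F →* F`
makes `g ∘ f` the identity on `Fᵃᵇ`. Such an endomorphism acts trivially on every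
`γⱼ F ⧸ γⱼ₊₁ F`, so it maps no element outside `γₖ F` into `γₖ F`.
-/

-- `LCS G k` is `γₖ₊₁ G` in the paper's indexing.
notation "LCS" G:max n:max => Subgroup.lowerCentralSeries (⊤ : Subgroup G) n

open Function Subgroup
open scoped commutatorElement

section

variable {G H : Type*} [Group G] [Group H]

theorem Subgroup.commutator_commutator_le_of_rotate {H₁ H₂ H₃ M : Subgroup G} [M.Normal]
    (h1 : ⁅⁅H₂, H₃⁆, H₁⁆ ≤ M) (h2 : ⁅⁅H₃, H₁⁆, H₂⁆ ≤ M) : ⁅⁅H₁, H₂⁆, H₃⁆ ≤ M := by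
  rw [← QuotientGroup.ker_mk' M, ← map_eq_bot_iff] at h1 h2 ⊢
  simp only [map_commutator] at h1 h2 ⊢
  exact commutator_commutator_eq_bot_of_rotate h1 h2

theorem Subgroup.commutator_lowerCentralSeries_le (i j : ℕ) :
    ⁅LCS G i, LCS G j⁆ ≤ LCS G (i + j + 1) := by
  induction i generalizing j with
  | zero => rw [commutator_comm, zero_add]; rfl
  | succ i ih =>
    refine commutator_commutator_le_of_rotate ?_ ?_
    · rw [commutator_comm ⊤, ← Subgroup.lowerCentralSeries_succ, commutator_comm,
        show i + 1 + j + 1 = i + (j + 1) + 1 by omega]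
      exact ih (j + 1)
    · rw [commutator_comm (LCS G j), show i + 1 + j + 1 = i + j + 1 + 1 by omega,
        Subgroup.lowerCentralSeries_succ]
      exact commutator_mono (ih j) le_rfl

theorem Subgroup.lowerCentralSeries_le_comap (f : G →* H) (k : ℕ) :
    LCS G k ≤ (LCS H k).comap f := by
  rw [← map_le_iff_le_comap, map_lowerCentralSeries]
  exact lowerCentralSeries_mono k le_top

theorem QuotientGroup.commute_mk_of_commutatorElement_mem {K : Subgroup G} [K.Normal]
    {a b : G} (h : ⁅a, b⁆ ∈ K) : Commute (a : G ⧸ K) b := by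
  rw [← commutatorElement_eq_one_iff_commute]
  exact (QuotientGroup.eq_one_iff ⁅a, b⁆).mpr h

theorem commutatorElement_mul_mul_eq {c u d v : G} (hc : ∀ y, Commute c y)
    (hud : Commute u d) (hd : Commute d ⁅u, v⁆) : ⁅c * u, d * v⁆ = ⁅u, v⁆ := by
  calc ⁅c * u, d * v⁆ = c * (u * d * v * u⁻¹) * c⁻¹ * (v⁻¹ * d⁻¹) := by group
    _ = u * d * v * u⁻¹ * v⁻¹ * d⁻¹ := by rw [(hc _).eq]; group
    _ = d * ⁅u, v⁆ * d⁻¹ := by rw [hud.eq]; group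
    _ = ⁅u, v⁆ := by rw [hd.eq]; group

section EndomorphismTrivialOnAbelianization

variable (h : G →* G) (hh : ∀ x, Abelianization.of (h x) = Abelianization.of x)
include hh

theorem mk_map_eq_mk_of_mem_lowerCentralSeries (j : ℕ) :
    ∀ x ∈ LCS G j, (h x : G ⧸ LCS G (j + 1)) = x := by
  induction j with
  | zero => exact fun x _ => hh x
  | succ j ih =>
    let q := QuotientGroup.mk' (LCS G (j + 2))
    suffices LCS G (j + 1) ≤ (q.comp h).eqLocus q from fun x hx => this hx
    rw [Subgroup.lowerCentralSeries_succ, commutator_le]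
    rintro u hu v -
    obtain ⟨c, hc, hcu⟩ : ∃ c ∈ LCS G (j + 1), h u = c * u :=
      ⟨h u / u, QuotientGroup.eq_iff_div_mem.mp (ih u hu), (div_mul_cancel _ _).symm⟩
    obtain ⟨d, hd, hdv⟩ : ∃ d ∈ LCS G 1, h v = d * v :=
      ⟨h v / v, QuotientGroup.eq_iff_div_mem.mp (hh v), (div_mul_cancel _ _).symm⟩
    have huv : ⁅u, v⁆ ∈ LCS G (j + 1) := commutator_mem_commutator hu (mem_top v)
    change q (h ⁅u, v⁆) = q ⁅u, v⁆
    rw [map_commutatorElement h, hcu, hdv, map_commutatorElement q, map_commutatorElement q,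
      map_mul, map_mul]
    -- Modulo `γⱼ₊₃`, `c` and `⁅u, v⁆` are central, and `⁅u, d⁆ ∈ ⁅γⱼ₊₁, γ₂⁆ ≤ γⱼ₊₃`.
    apply commutatorElement_mul_mul_eq
    · rintro ⟨w⟩
      exact QuotientGroup.commute_mk_of_commutatorElement_mem
        (commutator_mem_commutator hc (mem_top w))
    · exact QuotientGroup.commute_mk_of_commutatorElement_mem
        (commutator_lowerCentralSeries_le j 1 (commutator_mem_commutator hu hd))
    · exact (QuotientGroup.commute_mk_of_commutatorElement_mem
        (commutator_mem_commutator huv (mem_top d))).symm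

theorem mem_lowerCentralSeries_of_map_mem (k : ℕ) :
    ∀ x, h x ∈ LCS G k → x ∈ LCS G k := by
  induction k with
  | zero => exact fun x _ => mem_top x
  | succ k ih =>
    intro x hx
    have hx' := mk_map_eq_mk_of_mem_lowerCentralSeries h hh k x
      (ih x (Subgroup.lowerCentralSeries_antitone ⊤ k.le_succ hx))
    rwa [(QuotientGroup.eq_one_iff _).mpr hx, eq_comm, QuotientGroup.eq_one_iff] at hx'

end EndomorphismTrivialOnAbelianization

def IsHopfian (G : Type*) [Group G] : Prop :=
  ∀ f : G →* G, Surjective f → Injective f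

theorem IsHopfian.injective_of_surjective {K : Type*} [Group K] (hK : IsHopfian K)
    (φ : G ≃* K) (ψ : H ≃* K) (f : G →* H) (hf : Surjective f) : Injective f := by
  have he := hK ((ψ.toMonoidHom.comp f).comp φ.symm.toMonoidHom)
    (ψ.surjective.comp (hf.comp φ.symm.surjective))
  refine Injective.of_comp (f := ψ) ?_
  simpa [Function.comp_def] using he.comp φ.injective

theorem CommGroup.isHopfian_of_fg {A : Type*} [CommGroup A] [Group.FG A] : IsHopfian A := by
  intro f hf
  have : Module.Finite ℤ (Additive A) := Module.Finite.iff_addGroup_fg.mpr inferInstance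
  exact OrzechProperty.injective_of_surjective_endomorphism
    (MonoidHom.toAdditive f).toIntLinearMap hf

theorem FreeGroup.exists_comp_eq_of_surjective {α : Type*} (q : G →* H) (hq : Surjective q)
    (φ : FreeGroup α →* H) : ∃ ψ : FreeGroup α →* G, q.comp ψ = φ :=
  ⟨FreeGroup.lift fun a => surjInv hq (φ (FreeGroup.of a)),
    FreeGroup.ext_hom _ _ fun a => by simp [surjInv_eq hq]⟩

instance Abelianization.fg [Group.FG G] : Group.FG (Abelianization G) :=
  Group.fg_of_surjective (QuotientGroup.mk'_surjective (commutator G))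

theorem Abelianization.map_surjective_of_lift {k : ℕ} (f : G →* G)
    (e : G ⧸ LCS G (k + 1) →* G ⧸ LCS G (k + 1)) (he : Surjective e)
    (hf : (QuotientGroup.mk' _).comp f = e.comp (QuotientGroup.mk' _)) :
    Surjective (Abelianization.map f) := by
  let ab := QuotientGroup.lift (LCS G (k + 1)) Abelianization.of <| by
    rw [Abelianization.ker_of]
    exact Subgroup.lowerCentralSeries_antitone ⊤ (by omega : 1 ≤ k + 1)
  have hcomp : Abelianization.map f ∘ Abelianization.of = ab ∘ e ∘ QuotientGroup.mk' _ := by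
    funext x
    simp only [comp_apply]
    rw [← MonoidHom.comp_apply e, ← hf]
    rfl
  refine Surjective.of_comp (g := Abelianization.of) ?_
  rw [hcomp]
  exact (QuotientGroup.lift_surjective_of_surjective _ _ (QuotientGroup.mk'_surjective _) _).comp
    (he.comp (QuotientGroup.mk'_surjective _))

theorem FreeGroup.exists_abelianization_leftInverse {α : Type*} [Finite α]
    (f : FreeGroup α →* FreeGroup α) (hf : Surjective (Abelianization.map f)) :
    ∃ g : FreeGroup α →* FreeGroup α,
      ∀ x, Abelianization.of (g (f x)) = Abelianization.of x := by
  let E := MulEquiv.ofBijective _ ⟨CommGroup.isHopfian_of_fg _ hf, hf⟩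
  obtain ⟨g, hg⟩ := FreeGroup.exists_comp_eq_of_surjective Abelianization.of
    (QuotientGroup.mk'_surjective _) (E.symm.toMonoidHom.comp Abelianization.of)
  refine ⟨g, fun x => ?_⟩
  rw [← MonoidHom.comp_apply Abelianization.of g, hg]
  exact E.symm_apply_apply (Abelianization.of x)

theorem isHopfian_freeGroup_quotient_lowerCentralSeries (α : Type*) [Finite α] (k : ℕ) :
    IsHopfian (FreeGroup α ⧸ LCS (FreeGroup α) k) := by
  intro e he
  cases k with
  | zero =>
    have : Subsingleton (FreeGroup α ⧸ LCS (FreeGroup α) 0) :=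
      QuotientGroup.subsingleton_quotient_top
    exact injective_of_subsingleton e
  | succ k =>
    obtain ⟨f, hf⟩ := FreeGroup.exists_comp_eq_of_surjective _ (QuotientGroup.mk'_surjective _)
      (e.comp (QuotientGroup.mk' _))
    obtain ⟨g, hg⟩ := FreeGroup.exists_abelianization_leftInverse f
      (Abelianization.map_surjective_of_lift f e he hf)
    rw [injective_iff_map_eq_one]
    rintro ⟨x⟩ hx
    have hfx : f x ∈ LCS (FreeGroup α) (k + 1) := by
      rw [← QuotientGroup.eq_one_iff]
      exact (DFunLike.congr_fun hf x).trans hx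
    exact (QuotientGroup.eq_one_iff x).mpr <| mem_lowerCentralSeries_of_map_mem (g.comp f) hg
      _ x (lowerCentralSeries_le_comap g _ hfx)

theorem rank_abelianization_freeGroup (α : Type*) [Fintype α] :
    Group.rank (Abelianization (FreeGroup α)) = Fintype.card α := by
  classical
  apply le_antisymm
  · calc Group.rank (Abelianization (FreeGroup α))
        ≤ (Finset.univ.image fun a => Abelianization.of (FreeGroup.of a)).card := by
          apply Group.rank_le
          rw [Finset.coe_image, Finset.coe_univ, Set.image_univ, Set.range_comp',
            ← MonoidHom.map_closure, FreeGroup.closure_range_of]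
          exact map_top_of_surjective _ (QuotientGroup.mk'_surjective _)
      _ ≤ Fintype.card α := Finset.card_image_le
  · obtain ⟨S, hS_card, hS⟩ := Group.rank_spec (Abelianization (FreeGroup α))
    let T : Finset (Additive (Abelianization (FreeGroup α))) := S.map Additive.ofMul.toEmbedding
    have hT : Submodule.span ℤ (T : Set (Additive (Abelianization (FreeGroup α)))) = ⊤ := by
      have hT_eq : (T : Set _) = Additive.toMul ⁻¹' (S : Set (Abelianization (FreeGroup α))) := by
        ext x; simp [T]
      apply Submodule.toAddSubgroup_injective
      rw [Submodule.span_int_eq_addSubgroupClosure, hT_eq, ← Subgroup.toAddSubgroup_closure, hS]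
      rfl
    calc Fintype.card α = Module.finrank ℤ (Additive (Abelianization (FreeGroup α))) :=
          (Module.finrank_eq_card_basis (FreeAbelianGroup.basis α)).symm
      _ = (T : Set (Additive (Abelianization (FreeGroup α)))).finrank ℤ := by
          rw [Set.finrank, hT, finrank_top]
      _ ≤ T.card := finrank_span_finset_le_card T
      _ = Group.rank (Abelianization (FreeGroup α)) := by rw [← hS_card]; exact Finset.card_map _

variable (G) in
theorem abelianRank_eq_rank [Group.FG (Abelianization G)] :
    abelianRank G = Group.rank (Abelianization G) := by
  rw [abelianRank, Group.rank]
  exact Nat.sInf_def (Group.fg_iff'.mp ‹_›)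

theorem abelianRank_eq_of_mulEquiv_freeGroup {α : Type*} [Fintype α]
    (e : G ⧸ LCS G 1 ≃* FreeGroup α ⧸ LCS (FreeGroup α) 1) :
    abelianRank G = Fintype.card α := by
  let e' : Abelianization G ≃* Abelianization (FreeGroup α) := e
  have : Group.FG (Abelianization G) :=
    Group.fg_of_surjective (f := e'.symm.toMonoidHom) e'.symm.surjective
  rw [abelianRank_eq_rank, Group.rank_congr e', rank_abelianization_freeGroup]

theorem ker_le_lowerCentralSeries_of_mulEquiv {α : Type*} [Finite α] {f : G →* H}
    (hf : Surjective f) {k : ℕ} (φ : G ⧸ LCS G k ≃* FreeGroup α ⧸ LCS (FreeGroup α) k)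
    (ψ : H ⧸ LCS H k ≃* FreeGroup α ⧸ LCS (FreeGroup α) k) : f.ker ≤ LCS G k := by
  let fk := QuotientGroup.map _ _ f (lowerCentralSeries_le_comap f k)
  have hfk : Injective fk :=
    (isHopfian_freeGroup_quotient_lowerCentralSeries α k).injective_of_surjective φ ψ fk
      (QuotientGroup.map_surjective_of_surjective _ _ f (QuotientGroup.mk_surjective.comp hf) _)
  intro x hx
  rw [← QuotientGroup.eq_one_iff]
  apply hfk
  rw [map_one, QuotientGroup.map_mk, MonoidHom.mem_ker.mp hx, QuotientGroup.mk_one]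

end

/-- If `P` is parafree and `P ⧸ N` is parafree of the same abelian rank, then `N` is
trivial. -/
theorem parafree_quotient_same_rank_eq_bot
    (P : Type*) [Group P] (N : Subgroup P) [N.Normal]
    (hP : IsParafree P) (hQ : IsParafree (P ⧸ N))
    (hrank : abelianRank (P ⧸ N) = abelianRank P) :
    N = ⊥ := by
  obtain ⟨-, hP_res, n, φ⟩ := hP
  obtain ⟨-, -, m, ψ⟩ := hQ
  obtain rfl : m = n := by
    simpa [abelianRank_eq_of_mulEquiv_freeGroup (ψ 1).some,
      abelianRank_eq_of_mulEquiv_freeGroup (φ 1).some] using hrank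
  have hN : N ≤ ⨅ k, LCS P k := le_iInf fun k => by
    simpa using ker_le_lowerCentralSeries_of_mulEquiv (QuotientGroup.mk'_surjective N)
      (φ k).some (ψ k).some
  rwa [hP_res, le_bot_iff] at hN
end

section
/- Let k be a commutative ring and let φ : G̃ → G be a surjective group homomorphism with kernel K. Regard the group algebra kG as a kG̃-module via φ. If the natural homomorphism of kG-modules kI_{G̃} ⊗_{kG̃} kG → kI_G, defined by a ⊗ b ↦ φ(a)·b (where φ also denotes the induced map kG̃ → kG on group algebras), is an isomorphism, then k ⊗_ℤ (K/[K,K]) = 0. -/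
/-- The augmentation homomorphism `kG → k`, sending every group element to `1`. -/
noncomputable def augHom (k : Type*) [CommRing k] (G : Type*) [Group G] :
    MonoidAlgebra k G →ₐ[k] k :=
  MonoidAlgebra.lift k k G 1

/-- The augmentation ideal `kI_G`: the kernel of the augmentation map `kG → k`. -/
noncomputable def augIdeal (k : Type*) [CommRing k] (G : Type*) [Group G] :
    Ideal (MonoidAlgebra k G) :=
  RingHom.ker (augHom k G)

/-- `kI_Λ^Γ` for `Λ` (the image of) a subgroup given by a subset `s` of `Γ`: the left
ideal of `kΓ` generated by the elements `λ - 1` for `λ ∈ s`. -/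
noncomputable def relAugIdeal (k : Type*) [CommRing k] {G : Type*} [Group G] (s : Set G) :
    Ideal (MonoidAlgebra k G) :=
  Ideal.span ((fun g => (MonoidAlgebra.of k G g : MonoidAlgebra k G) - 1) '' s)

/-!
Choose a section `s` of `φ` with `s 1 = 1` and let `μ g ∈ K_ab` be the class of `s(φ g)⁻¹ g`.
The additive map `λ : kG̃ → k ⊗ K_ab`, `r g ↦ r ⊗ μ g`, satisfies `λ(a z) = λ(a · s(π z))` for
`a ∈ kI_{G̃}`, because `μ (h g) = μ (h s(φ g)) + μ g`. Hence `(a, b) ↦ λ(a · s b)` is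
`kG̃`-balanced and factors through `kI_G`. For `κ ∈ K` we have `π(κ - 1) = 0`, so the
factorisation forces `r ⊗ [κ] = λ(r κ - r) = 0`.
-/

open MonoidAlgebra TensorProduct

section NormalizedSection

variable {Gt G : Type*} [Group Gt] [Group G] {φ : Gt →* G} (hφ : Function.Surjective φ)

open scoped Classical in
noncomputable def normalizedSection : G → Gt :=
  fun x => if x = 1 then 1 else Function.surjInv hφ x

@[simp]
lemma normalizedSection_one : normalizedSection hφ 1 = 1 :=
  if_pos rfl

@[simp]
lemma apply_normalizedSection (x : G) : φ (normalizedSection hφ x) = x := by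
  by_cases hx : x = 1
  · subst hx; simp
  · simp [normalizedSection, hx, Function.surjInv_eq]

noncomputable def kerComponent (g : Gt) : Additive (Abelianization φ.ker) :=
  .ofMul (.of ⟨(normalizedSection hφ (φ g))⁻¹ * g, by simp [MonoidHom.mem_ker]⟩)

lemma kerComponent_of_mem_ker (κ : φ.ker) :
    kerComponent hφ κ = .ofMul (.of κ) := by
  simp only [kerComponent]
  congr 2
  simp [MonoidHom.mem_ker.1 κ.2]

@[simp]
lemma kerComponent_one : kerComponent hφ 1 = 0 := by
  simpa using kerComponent_of_mem_ker hφ 1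

@[simp]
lemma kerComponent_normalizedSection (x : G) :
    kerComponent hφ (normalizedSection hφ x) = 0 := by
  rw [kerComponent, ofMul_eq_zero]
  convert map_one (Abelianization.of (G := φ.ker))
  simp

lemma kerComponent_mul (h g : Gt) :
    kerComponent hφ (h * g) =
      kerComponent hφ (h * normalizedSection hφ (φ g)) + kerComponent hφ g := by
  simp only [kerComponent, ← ofMul_mul, ← map_mul]
  congr 2
  ext
  simp only [map_mul, apply_normalizedSection, Subgroup.coe_mul]
  group

end NormalizedSection

lemma MonoidAlgebra.mapDomain_mapDomain_of_leftInverse {R M N : Type*} [Semiring R]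
    {f : M → N} {g : N → M} (hfg : Function.LeftInverse f g) (x : MonoidAlgebra R N) :
    mapDomain f (mapDomain g x) = x := by
  induction x using induction_linear with
  | zero => simp only [mapDomain_zero]
  | add x y hx hy => simp only [mapDomain_add, hx, hy]
  | single n r => simp only [mapDomain_single, hfg n]

section LiftTmul

variable {k G M : Type*} [CommRing k] [AddCommGroup M]

noncomputable def liftTmul (f : G → M) : MonoidAlgebra k G →+ k ⊗[ℤ] M :=
  (Finsupp.liftAddHom fun g => ((TensorProduct.mk ℤ k M).flip (f g)).toAddMonoidHom).comp
    coeffAddEquiv.toAddMonoidHom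

@[simp]
lemma liftTmul_single (f : G → M) (g : G) (r : k) :
    liftTmul f (single g r) = r ⊗ₜ[ℤ] f g :=
  Finsupp.liftAddHom_apply_single _ _ _

end LiftTmul

section AugmentationIdeal

variable (k : Type*) [CommRing k] {G : Type*} [Group G]

@[simp]
lemma augHom_single (g : G) (r : k) : augHom k G (single g r) = r := by
  simp [augHom, lift_single]

lemma single_sub_single_one_mem_augIdeal (g : G) (r : k) :
    single g r - single 1 r ∈ augIdeal k G := by
  simp [augIdeal, RingHom.mem_ker]

lemma augHom_eq_sum (a : MonoidAlgebra k G) : augHom k G a = a.coeff.sum fun _ r => r := by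
  conv_lhs => rw [← sum_coeff_single a]
  rw [map_finsuppSum]
  simp only [augHom_single]

lemma eq_sum_single_sub_single_one_of_mem_augIdeal {a : MonoidAlgebra k G}
    (ha : a ∈ augIdeal k G) : a = a.coeff.sum fun g r => single g r - single 1 r := by
  have hsum : (a.coeff.sum fun _ r => single (1 : G) r) = single 1 (augHom k G a) := by
    rw [augHom_eq_sum]
    exact (map_finsuppSum (singleAddHom (1 : G)) _ _).symm
  rw [Finsupp.sum_sub, hsum, RingHom.mem_ker.1 ha, single_zero, sub_zero, sum_coeff_single]

theorem augIdeal_induction {P : MonoidAlgebra k G → Prop} (zero : P 0)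
    (add : ∀ a b, P a → P b → P (a + b))
    (single_sub_single_one : ∀ g r, P (single g r - single 1 r))
    {a : MonoidAlgebra k G} (ha : a ∈ augIdeal k G) : P a := by
  rw [eq_sum_single_sub_single_one_of_mem_augIdeal k ha]
  exact Finset.sum_induction _ P add zero fun g _ => single_sub_single_one g _

end AugmentationIdeal

lemma MonoidAlgebra.eq_mapDomainAlgHom_of_apply_of {k Gt G : Type*} [CommRing k] [Monoid Gt]
    [Monoid G] {φ : Gt →* G} {π : MonoidAlgebra k Gt →ₐ[k] MonoidAlgebra k G}
    (hπ : ∀ g : Gt, π (of k Gt g) = of k G (φ g)) :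
    π = mapDomainAlgHom k k φ :=
  algHom_ext (fun g => by simpa using hπ g) (Subsingleton.elim _ _)

section Key

variable (k : Type*) [CommRing k] {Gt G : Type*} [Group Gt] [Group G] {φ : Gt →* G}
  (hφ : Function.Surjective φ)

lemma liftTmul_kerComponent_single_sub_single_one_mul (h : Gt) (r : k) (z : MonoidAlgebra k Gt) :
    liftTmul (kerComponent hφ) ((single h r - single 1 r) * z) =
      liftTmul (kerComponent hφ)
        ((single h r - single 1 r) * mapDomain (normalizedSection hφ) (mapDomain φ z)) := by
  induction z using induction_linear with
  | zero => simp [mapDomain_zero]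
  | add z z' hz hz' => simp only [mapDomain_add, mul_add, map_add, hz, hz']
  | single g c =>
    simp [mapDomain_single, sub_mul, single_mul_single, kerComponent_mul hφ h g, tmul_add]

lemma liftTmul_kerComponent_mul_of_mem_augIdeal {a : MonoidAlgebra k Gt}
    (ha : a ∈ augIdeal k Gt) (z : MonoidAlgebra k Gt) :
    liftTmul (kerComponent hφ) (a * z) =
      liftTmul (kerComponent hφ) (a * mapDomain (normalizedSection hφ) (mapDomain φ z)) := by
  apply augIdeal_induction k _ _ _ ha
  · simp
  · intro a b ha hb
    simp only [add_mul, map_add, ha, hb]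
  · exact fun h r => liftTmul_kerComponent_single_sub_single_one_mul k hφ h r z

noncomputable def kerPairing (a : MonoidAlgebra k Gt) (b : MonoidAlgebra k G) :
    k ⊗[ℤ] Additive (Abelianization φ.ker) :=
  liftTmul (kerComponent hφ) (a * mapDomain (normalizedSection hφ) b)

lemma kerPairing_add_left (a a' : MonoidAlgebra k Gt) (b : MonoidAlgebra k G) :
    kerPairing k hφ (a + a') b = kerPairing k hφ a b + kerPairing k hφ a' b := by
  simp only [kerPairing, add_mul, map_add]

lemma kerPairing_add_right (a : MonoidAlgebra k Gt) (b b' : MonoidAlgebra k G) :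
    kerPairing k hφ a (b + b') = kerPairing k hφ a b + kerPairing k hφ a b' := by
  simp only [kerPairing, mapDomain_add, mul_add, map_add]

lemma kerPairing_mul_left_of_mem_augIdeal {a : MonoidAlgebra k Gt} (ha : a ∈ augIdeal k Gt)
    (r : MonoidAlgebra k Gt) (b : MonoidAlgebra k G) :
    kerPairing k hφ (a * r) b = kerPairing k hφ a (mapDomainAlgHom k k φ r * b) := by
  rw [kerPairing, mul_assoc, liftTmul_kerComponent_mul_of_mem_augIdeal k hφ ha,
    ← mapDomainAlgHom_apply k k φ, map_mul (mapDomainAlgHom k k φ),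
    mapDomainAlgHom_apply k k φ (mapDomain _ b),
    mapDomain_mapDomain_of_leftInverse (apply_normalizedSection hφ), kerPairing]

lemma kerPairing_single_sub_single_one_one (κ : φ.ker) (r : k) :
    kerPairing k hφ (single (κ : Gt) r - single 1 r) 1 = r ⊗ₜ .ofMul (.of κ) := by
  simp [kerPairing, one_def, mapDomain_single, sub_mul, kerComponent_of_mem_ker]

end Key

lemma TensorProduct.subsingleton_of_forall_tmul_eq_zero {R M N : Type*} [CommSemiring R]
    [AddCommMonoid M] [AddCommMonoid N] [Module R M] [Module R N]
    (h : ∀ (m : M) (n : N), m ⊗ₜ[R] n = 0) : Subsingleton (M ⊗[R] N) :=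
  subsingleton_of_forall_eq 0 fun z =>
    z.induction_on rfl h fun x y hx hy => by rw [hx, hy, add_zero]

/-- Let `φ : G̃ → G` be a surjective group homomorphism with kernel `K`, and let
`π : kG̃ → kG` be the induced map of group algebras.  If the natural homomorphism
`kI_{G̃} ⊗_{kG̃} kG → kI_G`, `a ⊗ b ↦ φ(a)·b`, is an isomorphism — expressed here via
the universal property: the canonical `kG̃`-balanced biadditive map
`kI_{G̃} × kG → kI_G`, `(a, b) ↦ π(a)·b`, is universal among such maps — then
`k ⊗_ℤ K_{ab} = 0`, i.e. the tensor product is trivial. -/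
theorem tensor_augmentation_iso_implies_kernel_abelianization_trivial
    (k : Type) [CommRing k] (Gt G : Type) [Group Gt] [Group G]
    (φ : Gt →* G) (hφ : Function.Surjective φ)
    (π : MonoidAlgebra k Gt →ₐ[k] MonoidAlgebra k G)
    (hπ : ∀ g : Gt, π (MonoidAlgebra.of k Gt g) = MonoidAlgebra.of k G (φ g))
    (huniv : ∀ (Q : Type) (_ : AddCommGroup Q)
      (β : ↥(augIdeal k Gt) → MonoidAlgebra k G → Q),
      (∀ a a' b, β (a + a') b = β a b + β a' b) →
      (∀ a b b', β a (b + b') = β a b + β a b') →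
      (∀ (a : ↥(augIdeal k Gt)) (r : MonoidAlgebra k Gt) (b : MonoidAlgebra k G)
        (har : (a : MonoidAlgebra k Gt) * r ∈ augIdeal k Gt),
          β ⟨(a : MonoidAlgebra k Gt) * r, har⟩ b = β a (π r * b)) →
      ∃! h : ↥(augIdeal k G) →+ Q,
        ∀ (a : ↥(augIdeal k Gt)) (b : MonoidAlgebra k G)
          (hx : π (a : MonoidAlgebra k Gt) * b ∈ augIdeal k G),
            h ⟨π (a : MonoidAlgebra k Gt) * b, hx⟩ = β a b) :
    Subsingleton (TensorProduct ℤ k (Additive (Abelianization ↥φ.ker))) := by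
  obtain rfl := eq_mapDomainAlgHom_of_apply_of hπ
  obtain ⟨h, hh, -⟩ := huniv _ inferInstance (fun a => kerPairing k hφ a)
    (fun a a' b => kerPairing_add_left k hφ a a' b) (fun a b b' => kerPairing_add_right k hφ a b b')
    (fun a r b _ => kerPairing_mul_left_of_mem_augIdeal k hφ a.2 r b)
  refine subsingleton_of_forall_tmul_eq_zero fun r m => ?_
  obtain ⟨κ, rfl⟩ := QuotientGroup.mk_surjective m
  have hzero : mapDomainAlgHom k k φ (single (κ : Gt) r - single 1 r) * 1 = 0 := by
    simp only [mul_one, map_sub, mapDomainAlgHom_apply, mapDomain_single, MonoidHom.mem_ker.1 κ.2,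
      map_one, sub_self]
  calc r ⊗ₜ[ℤ] Additive.ofMul (Abelianization.of κ)
      = kerPairing k hφ (single (κ : Gt) r - single 1 r) 1 :=
        (kerPairing_single_sub_single_one_one k hφ κ r).symm
    _ = h ⟨_, hzero ▸ zero_mem _⟩ :=
        (hh ⟨_, single_sub_single_one_mem_augIdeal k (κ : Gt) r⟩ 1 _).symm
    _ = 0 := by rw [show (⟨_, _⟩ : augIdeal k G) = 0 from Subtype.ext hzero, map_zero]
end

section
/- Let k be a commutative ring, let θ₁ : C → A and θ₂ : C → B be group homomorphisms, and let Γ = A *_C B be the induced amalgamated product, i.e. the quotient of the free product A * B by the normal closure of {θ₁(c)θ₂(c)⁻¹ : c ∈ C}; denote by A, B, C also their canonical images in Γ (under which θ₁(c) = θ₂(c) for all c ∈ C). Then the sequence of left kΓ-modules 0 → kI_C^Γ →α kI_A^Γ ⊕ kI_B^Γ →β kI_Γ → 0 is exact, where α(z) = (z, −z) for z ∈ kI_C^Γ (viewing kI_C^Γ as contained in both kI_A^Γ and kI_B^Γ) and β(x, y) = x + y. -/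
/-- The amalgamated product `A *_C B` of `θ₁ : C →* A` and `θ₂ : C →* B`: the quotient
of the free product `A ∗ B` by the normal closure of the elements
`inl (θ₁ c) * (inr (θ₂ c))⁻¹`, `c ∈ C`. -/
abbrev Amal (A B C : Type) [Group A] [Group B] [Group C]
    (θ₁ : C →* A) (θ₂ : C →* B) : Type :=
  Monoid.Coprod A B ⧸ Subgroup.normalClosure
    {x : Monoid.Coprod A B | ∃ c : C,
      x = Monoid.Coprod.inl (θ₁ c) * (Monoid.Coprod.inr (θ₂ c))⁻¹}

/-- The ideal `kI_A^Γ` of `kΓ` for `Γ = A *_C B`, where `A` denotes the canonical image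
of `A` in `Γ`. -/
noncomputable def amalIA (k : Type) [CommRing k] (A B C : Type) [Group A] [Group B]
    [Group C] (θ₁ : C →* A) (θ₂ : C →* B) : Ideal (MonoidAlgebra k (Amal A B C θ₁ θ₂)) :=
  relAugIdeal k
    (Set.range fun a : A => (QuotientGroup.mk (Monoid.Coprod.inl a) : Amal A B C θ₁ θ₂))

/-- The ideal `kI_B^Γ` of `kΓ` for `Γ = A *_C B`. -/
noncomputable def amalIB (k : Type) [CommRing k] (A B C : Type) [Group A] [Group B]
    [Group C] (θ₁ : C →* A) (θ₂ : C →* B) : Ideal (MonoidAlgebra k (Amal A B C θ₁ θ₂)) :=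
  relAugIdeal k
    (Set.range fun b : B => (QuotientGroup.mk (Monoid.Coprod.inr b) : Amal A B C θ₁ θ₂))

/-- The ideal `kI_C^Γ` of `kΓ` for `Γ = A *_C B`, where `C` denotes the canonical image
of `C` in `Γ` (the images of `θ₁` and `θ₂` agree in `Γ`). -/
noncomputable def amalIC (k : Type) [CommRing k] (A B C : Type) [Group A] [Group B]
    [Group C] (θ₁ : C →* A) (θ₂ : C →* B) : Ideal (MonoidAlgebra k (Amal A B C θ₁ θ₂)) :=
  relAugIdeal k
    (Set.range fun c : C =>
      (QuotientGroup.mk (Monoid.Coprod.inl (θ₁ c)) : Amal A B C θ₁ θ₂))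

/-!
For a subgroup `H ≤ Γ`, the left ideal `kI_H^Γ` is the kernel of the map `kΓ → k[Γ/H]` that sums
coefficients over left cosets. So an element of `kI_A^Γ ∩ kI_B^Γ` yields a finitely supported
function on `Γ/C` whose push-forwards to `Γ/A` and `Γ/B` vanish. Read `Γ/C` as the edges of the
Bass–Serre tree, whose vertices are `Γ/A ⊔ Γ/B`. If the support were nonempty, every edge in it
would share each of its endpoints with another edge of the support. That would give an endless walk
through the support, alternately pivoting at `A`- and `B`-vertices. The normal form theorem for
amalgamated products says such a walk never repeats an edge, which a finite support rules out.
Hence the function vanishes and the element lies in `kI_C^Γ`. Exactness at `kI_Γ` holds because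
`A` and `B` generate `Γ`.
-/

section AugmentationIdeal

variable {k : Type*} [CommRing k] {G : Type*} [Group G]

open MonoidAlgebra

theorem relAugIdeal_mono {s t : Set G} (h : s ⊆ t) : relAugIdeal k s ≤ relAugIdeal k t :=
  Ideal.span_mono (Set.image_mono h)

theorem relAugIdeal_union (s t : Set G) :
    relAugIdeal k (s ∪ t) = relAugIdeal k s ⊔ relAugIdeal k t := by
  rw [relAugIdeal, Set.image_union, Ideal.span_union]
  rfl

theorem augHom_of (g : G) : augHom k G (of k G g) = 1 :=
  MonoidAlgebra.lift_of _ _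

theorem relAugIdeal_le_augIdeal (s : Set G) : relAugIdeal k s ≤ augIdeal k G := by
  refine Ideal.span_le.2 ?_
  rintro _ ⟨g, -, rfl⟩
  rw [SetLike.mem_coe, augIdeal, RingHom.mem_ker, map_sub, augHom_of, map_one, sub_self]

theorem augIdeal_le_of_forall_of_sub_one_mem {J : Ideal (MonoidAlgebra k G)}
    (hJ : ∀ g, of k G g - 1 ∈ J) : augIdeal k G ≤ J := by
  have key : ∀ x : MonoidAlgebra k G, x - augHom k G x • 1 ∈ J := by
    intro x
    induction x using MonoidAlgebra.induction_linear with
    | zero => simp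
    | add x y hx hy => simpa [add_smul, add_sub_add_comm] using add_mem hx hy
    | single g c =>
      rw [← smul_of, map_smul, augHom_of, smul_eq_mul, mul_one, ← smul_sub]
      exact Submodule.smul_of_tower_mem _ c (hJ g)
  intro x hx
  simpa [(RingHom.mem_ker).1 hx] using key x

theorem of_sub_one_mem_relAugIdeal {s : Set G} {g : G} (hg : g ∈ Subgroup.closure s) :
    of k G g - 1 ∈ relAugIdeal k s := by
  induction hg using Subgroup.closure_induction with
  | mem g hg => exact Ideal.subset_span ⟨g, hg, rfl⟩
  | one => simp only [map_one, sub_self, zero_mem]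
  | mul g h _ _ hg hh =>
    have : of k G (g * h) - 1 = of k G g * (of k G h - 1) + (of k G g - 1) := by
      rw [map_mul, mul_sub, mul_one, sub_add_sub_cancel]
    rw [this]
    exact add_mem (Ideal.mul_mem_left _ _ hh) hg
  | inv g _ hg =>
    have : of k G g⁻¹ - 1 = -(of k G g⁻¹ * (of k G g - 1)) := by
      rw [mul_sub, ← map_mul, inv_mul_cancel, map_one, mul_one, neg_sub]
    rw [this]
    exact neg_mem (Ideal.mul_mem_left _ _ hg)

theorem augIdeal_le_relAugIdeal_of_closure_eq_top {s : Set G}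
    (hs : Subgroup.closure s = ⊤) : augIdeal k G ≤ relAugIdeal k s :=
  augIdeal_le_of_forall_of_sub_one_mem fun _ =>
    of_sub_one_mem_relAugIdeal (hs ▸ Subgroup.mem_top _)

end AugmentationIdeal

section Cosets

variable {k : Type*} [CommRing k] {Γ : Type*} [Group Γ] (H : Subgroup Γ)

open MonoidAlgebra

/-- The projection `kΓ → k[Γ/H] ≅ kΓ ⊗_{kH} k`. -/
noncomputable def cosetSum : MonoidAlgebra k Γ →ₗ[k] (Γ ⧸ H →₀ k) :=
  Finsupp.lmapDomain k k QuotientGroup.mk ∘ₗ (coeffLinearEquiv k).toLinearMap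

theorem cosetSum_single (g : Γ) (c : k) :
    cosetSum H (single g c) = Finsupp.single (g : Γ ⧸ H) c :=
  Finsupp.mapDomain_single

theorem cosetSum_single_mul (g : Γ) (c : k) (x : MonoidAlgebra k Γ) :
    cosetSum H (single g c * x) = c • (cosetSum H x).mapDomain (g • ·) := by
  induction x using MonoidAlgebra.induction_linear with
  | zero => simp
  | add x y hx hy => rw [mul_add, map_add, map_add, hx, hy, Finsupp.mapDomain_add, smul_add]
  | single γ d =>
    rw [single_mul_single, cosetSum_single, cosetSum_single, Finsupp.mapDomain_single,
      Finsupp.smul_single, MulAction.Quotient.smul_mk, smul_eq_mul, smul_eq_mul]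

theorem mapDomain_cosetSum {K : Subgroup Γ} (h : H ≤ K) (x : MonoidAlgebra k Γ) :
    (cosetSum H x).mapDomain (Subgroup.quotientMapOfLE h) = cosetSum K x :=
  Finsupp.mapDomain_comp.symm

theorem cosetSum_eq_zero_of_mem {x : MonoidAlgebra k Γ} (hx : x ∈ relAugIdeal k (H : Set Γ)) :
    cosetSum H x = 0 := by
  induction hx using Submodule.span_induction with
  | mem _ hy =>
    obtain ⟨h, hh, rfl⟩ := hy
    have : (h : Γ ⧸ H) = ((1 : Γ) : Γ ⧸ H) := QuotientGroup.eq.2 (by simpa using hh)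
    rw [map_sub, of_apply, one_def, cosetSum_single, cosetSum_single, this, sub_self]
  | zero => exact map_zero _
  | add x y _ _ hx hy => rw [map_add, hx, hy, add_zero]
  | smul r y _ hy =>
    induction r using MonoidAlgebra.induction_linear with
    | zero => rw [zero_smul, map_zero]
    | add r r' hr hr' => rw [add_smul, map_add, hr, hr', add_zero]
    | single g c => rw [smul_eq_mul, cosetSum_single_mul, hy, Finsupp.mapDomain_zero, smul_zero]

theorem sub_mapDomain_out_mem_relAugIdeal (x : MonoidAlgebra k Γ) :
    x - x.mapDomain (fun γ : Γ => (γ : Γ ⧸ H).out) ∈ relAugIdeal k (H : Set Γ) := by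
  induction x using MonoidAlgebra.induction_linear with
  | zero => simp
  | add x y hx hy => simpa [mapDomain_add, add_sub_add_comm] using add_mem hx hy
  | single γ c =>
    set ρ := (γ : Γ ⧸ H).out
    have hρ : ρ⁻¹ * γ ∈ H := QuotientGroup.eq.1 (QuotientGroup.out_eq' _)
    have : single γ c - single ρ c = single ρ c * (of k Γ (ρ⁻¹ * γ) - 1) := by
      rw [mul_sub, mul_one, of_apply, single_mul_single, mul_inv_cancel_left, mul_one]
    rw [mapDomain_single, this]
    exact Ideal.mul_mem_left _ _ (Ideal.subset_span ⟨_, hρ, rfl⟩)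

theorem mem_relAugIdeal_iff_cosetSum_eq_zero (x : MonoidAlgebra k Γ) :
    x ∈ relAugIdeal k (H : Set Γ) ↔ cosetSum H x = 0 := by
  refine ⟨cosetSum_eq_zero_of_mem H, fun hx => ?_⟩
  have hout : x.mapDomain (fun γ : Γ => (γ : Γ ⧸ H).out) = 0 := by
    have : x.coeff.mapDomain (fun γ : Γ => (γ : Γ ⧸ H).out)
        = (cosetSum H x).mapDomain Quotient.out :=
      Finsupp.mapDomain_comp
    rw [MonoidAlgebra.mapDomain, this, hx, Finsupp.mapDomain_zero, ofCoeff_zero]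
  simpa [hout] using sub_mapDomain_out_mem_relAugIdeal H x

end Cosets

section AlternatingWalk

variable {X M : Type*} [AddCommMonoid M]

theorem Finsupp.exists_ne_map_eq_of_mapDomain_eq_zero {Y : Type*} {f : X → Y} {v : X →₀ M}
    (hv : v.mapDomain f = 0) {x : X} (hx : x ∈ v.support) :
    ∃ x' ∈ v.support, x' ≠ x ∧ f x' = f x := by
  classical
  by_contra! h
  have : v.mapDomain f (f x) = v x := by
    rw [Finsupp.mapDomain_apply_eq_sum]
    refine Finset.sum_eq_single_of_mem x (Finset.mem_filter.2 ⟨hx, rfl⟩) fun x' hx' hne => ?_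
    exact absurd (Finset.mem_filter.1 hx').2 (h x' (Finset.mem_filter.1 hx').1 hne)
  exact Finsupp.mem_support_iff.1 hx (by rw [← this, hv, Finsupp.zero_apply])

/-- Read `x : X` as an edge joining the vertices `p true x` and `p false x` of a bipartite
graph. An alternating walk is then a walk in its line graph that never stays on an edge and
alternately pivots about the `true`-end and the `false`-end. -/
def IsAlternatingWalk {Y : Bool → Type*} (p : ∀ b, X → Y b) (w : ℕ → X) : Prop :=
  ∀ t, w (t + 1) ≠ w t ∧ p (decide (Even t)) (w (t + 1)) = p (decide (Even t)) (w t)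

/-- On a forest, a finitely supported function on edges whose boundary vanishes is zero. -/
theorem Finsupp.eq_zero_of_forall_mapDomain_eq_zero {Y : Bool → Type*} {p : ∀ b, X → Y b}
    (hp : ∀ w, IsAlternatingWalk p w → Function.Injective w) {v : X →₀ M}
    (hv : ∀ b, v.mapDomain (p b) = 0) : v = 0 := by
  by_contra hv0
  obtain ⟨x₀, hx₀⟩ := Finsupp.support_nonempty_iff.2 hv0
  choose! next hnext_mem hnext_ne hnext_eq using
    fun b x (hx : x ∈ v.support) => Finsupp.exists_ne_map_eq_of_mapDomain_eq_zero (hv b) hx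
  let w : ℕ → X := fun t => Nat.rec x₀ (fun t x => next (decide (Even t)) x) t
  have hw_mem : ∀ t, w t ∈ v.support := fun t => by
    induction t with
    | zero => exact hx₀
    | succ t ih => exact hnext_mem _ _ ih
  have hw : IsAlternatingWalk p w := fun t => ⟨hnext_ne _ _ (hw_mem t), hnext_eq _ _ (hw_mem t)⟩
  exact not_injective_infinite_finite (fun t => (⟨w t, hw_mem t⟩ : v.support))
    fun i j hij => hp w hw (congrArg Subtype.val hij)

end AlternatingWalk

section NormalForm

variable {Γ : Type*} [Group Γ] {G : Bool → Subgroup Γ} {C : Subgroup Γ} {hC : ∀ b, C ≤ G b}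
  {f : Γ →* Monoid.PushoutI fun b => Subgroup.inclusion (hC b)}

/-- The letters `(s t)⁻¹ * s (t + 1)` form a reduced word of the amalgamated product, whose
normal form theorem forbids its value from lying in the base `C`. -/
theorem inv_mul_notMem_of_alternating (hf : ∀ b (x : G b), f x = Monoid.PushoutI.of b x)
    {idx : ℕ → Bool} (hidx : ∀ t, idx (t + 1) ≠ idx t) {s : ℕ → Γ}
    (hstep : ∀ t, (s t)⁻¹ * s (t + 1) ∈ G (idx t)) (hstep_notMem : ∀ t, (s t)⁻¹ * s (t + 1) ∉ C)
    {n : ℕ} (hn : n ≠ 0) : (s 0)⁻¹ * s n ∉ C := by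
  intro hmem
  let word : Monoid.CoprodI.Word fun b => G b :=
    { toList := (List.range n).map fun t => ⟨idx t, ⟨_, hstep t⟩⟩
      ne_one := by
        simp only [List.mem_map]
        rintro _ ⟨t, -, rfl⟩ h
        have hone : (s t)⁻¹ * s (t + 1) = 1 := congrArg Subtype.val h
        exact hstep_notMem t (hone ▸ C.one_mem)
      chain_ne := by
        rw [List.isChain_map]
        exact (List.isChain_range _ _).2 fun t _ => (hidx t).symm }
  have hred : Monoid.PushoutI.Reduced (fun b => Subgroup.inclusion (hC b)) word := by
    intro g hg
    obtain ⟨t, -, rfl⟩ := List.mem_map.1 hg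
    rintro ⟨c, hc⟩
    have hc' : (c : Γ) = (s t)⁻¹ * s (t + 1) := congrArg Subtype.val hc
    exact hstep_notMem t (hc' ▸ c.2)
  have hprod : Monoid.PushoutI.ofCoprodI word.prod = f ((s 0)⁻¹ * s n) := by
    rw [← div_inv_eq_mul, ← List.prod_range_div' n fun t => (s t)⁻¹, map_list_prod,
      Monoid.CoprodI.Word.prod, map_list_prod, List.map_map, List.map_map, List.map_map]
    refine congrArg List.prod (List.map_congr_left fun t _ => ?_)
    simp only [Function.comp_apply, Monoid.PushoutI.ofCoprodI_of, div_inv_eq_mul]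
    exact (hf _ ⟨_, hstep t⟩).symm.trans (by rw [map_mul, map_inv])
  have hbase : Monoid.PushoutI.ofCoprodI word.prod
      ∈ (Monoid.PushoutI.base fun b => Subgroup.inclusion (hC b)).range := by
    refine ⟨⟨_, hmem⟩, ?_⟩
    rw [hprod, hf true ⟨_, hC true hmem⟩, ← Monoid.PushoutI.of_apply_eq_base _ true]
    rfl
  have := congrArg Monoid.CoprodI.Word.toList
    (hred.eq_empty_of_mem_range (fun b => Subgroup.inclusion_injective (hC b)) hbase)
  simp [word, hn] at this

theorem Subgroup.quotientMapOfLE_eq_iff {K : Subgroup Γ} (h : C ≤ K) (a b : Γ ⧸ C) :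
    Subgroup.quotientMapOfLE h a = Subgroup.quotientMapOfLE h b ↔ a.out⁻¹ * b.out ∈ K := by
  conv_lhs => rw [← QuotientGroup.out_eq' a, ← QuotientGroup.out_eq' b]
  rw [Subgroup.quotientMapOfLE_apply_mk, Subgroup.quotientMapOfLE_apply_mk, QuotientGroup.eq]

theorem IsAlternatingWalk.injective (hf : ∀ b (x : G b), f x = Monoid.PushoutI.of b x)
    {w : ℕ → Γ ⧸ C} (hw : IsAlternatingWalk (fun b => Subgroup.quotientMapOfLE (hC b)) w) :
    Function.Injective w := by
  refine Function.Injective.of_lt_imp_ne fun i j hij heq => ?_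
  refine inv_mul_notMem_of_alternating hf (idx := fun t => decide (Even (i + t)))
    (s := fun t => (w (i + t)).out) (n := j - i) ?_ (fun t => ?_) (fun t => ?_) (by omega) ?_
  · intro t
    by_cases h : Even (i + t) <;> simp [← add_assoc, Nat.even_add_one, h]
  · exact (Subgroup.quotientMapOfLE_eq_iff _ _ _).1 (hw (i + t)).2.symm
  · rw [← QuotientGroup.eq, QuotientGroup.out_eq', QuotientGroup.out_eq']
    exact (hw (i + t)).1.symm
  · rw [← QuotientGroup.eq, QuotientGroup.out_eq', QuotientGroup.out_eq', add_zero,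
      Nat.add_sub_cancel' hij.le, heq]

end NormalForm

theorem mem_relAugIdeal_of_forall_mem {k : Type*} [CommRing k] {Γ : Type*} [Group Γ]
    {G : Bool → Subgroup Γ} {C : Subgroup Γ} {hC : ∀ b, C ≤ G b}
    {f : Γ →* Monoid.PushoutI fun b => Subgroup.inclusion (hC b)}
    (hf : ∀ b (x : G b), f x = Monoid.PushoutI.of b x) {x : MonoidAlgebra k Γ}
    (hx : ∀ b, x ∈ relAugIdeal k (G b : Set Γ)) : x ∈ relAugIdeal k (C : Set Γ) := by
  simp only [mem_relAugIdeal_iff_cosetSum_eq_zero] at hx ⊢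
  refine Finsupp.eq_zero_of_forall_mapDomain_eq_zero (fun w hw => hw.injective hf) fun b => ?_
  rw [mapDomain_cosetSum C (hC b), hx b]

namespace Amal

variable {A B C : Type} [Group A] [Group B] [Group C] (θ₁ : C →* A) (θ₂ : C →* B)

def inl : A →* Amal A B C θ₁ θ₂ := (QuotientGroup.mk' _).comp Monoid.Coprod.inl

def inr : B →* Amal A B C θ₁ θ₂ := (QuotientGroup.mk' _).comp Monoid.Coprod.inr

theorem inl_comp_eq_inr_comp : (inl θ₁ θ₂).comp θ₁ = (inr θ₁ θ₂).comp θ₂ := by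
  ext c
  exact QuotientGroup.eq_iff_div_mem.2 (Subgroup.subset_normalClosure ⟨c, div_eq_mul_inv _ _⟩)

def factor (b : Bool) : Subgroup (Amal A B C θ₁ θ₂) := cond b (inl θ₁ θ₂).range (inr θ₁ θ₂).range

def base : Subgroup (Amal A B C θ₁ θ₂) := ((inl θ₁ θ₂).comp θ₁).range

theorem base_le_factor : ∀ b, base θ₁ θ₂ ≤ factor θ₁ θ₂ b
  | true => by rintro _ ⟨c, rfl⟩; exact ⟨θ₁ c, rfl⟩
  | false => by
    rintro _ ⟨c, rfl⟩
    exact ⟨θ₂ c, (DFunLike.congr_fun (inl_comp_eq_inr_comp θ₁ θ₂) c).symm⟩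

theorem closure_range_inl_union_range_inr :
    Subgroup.closure (Set.range (inl θ₁ θ₂) ∪ Set.range (inr θ₁ θ₂)) = ⊤ := by
  rw [inl, inr, MonoidHom.coe_comp, MonoidHom.coe_comp, Set.range_comp, Set.range_comp,
    ← Set.image_union, ← MonoidHom.map_closure, Monoid.Coprod.closure_range_inl_union_inr,
    ← MonoidHom.range_eq_map, QuotientGroup.range_mk']

noncomputable def toPushoutI :
    Amal A B C θ₁ θ₂ →* Monoid.PushoutI fun b => Subgroup.inclusion (base_le_factor θ₁ θ₂ b) :=
  QuotientGroup.lift _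
    (Monoid.Coprod.lift
      ((Monoid.PushoutI.of true).comp
        ((inl θ₁ θ₂).codRestrict (factor θ₁ θ₂ true) fun a => ⟨a, rfl⟩))
      ((Monoid.PushoutI.of false).comp
        ((inr θ₁ θ₂).codRestrict (factor θ₁ θ₂ false) fun b => ⟨b, rfl⟩))) <| by
    refine Subgroup.normalClosure_le_normal ?_
    rintro _ ⟨c, rfl⟩
    rw [SetLike.mem_coe, MonoidHom.mem_ker, map_mul, map_inv, mul_inv_eq_one,
      Monoid.Coprod.lift_apply_inl, Monoid.Coprod.lift_apply_inr]
    let x : base θ₁ θ₂ := ⟨_, c, rfl⟩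
    exact (Monoid.PushoutI.of_apply_eq_base _ true x).trans <|
      (Monoid.PushoutI.of_apply_eq_base _ false x).symm.trans <|
        congrArg _ <| Subtype.ext <| DFunLike.congr_fun (inl_comp_eq_inr_comp θ₁ θ₂) c

theorem toPushoutI_apply : ∀ b (x : factor θ₁ θ₂ b), toPushoutI θ₁ θ₂ x = Monoid.PushoutI.of b x
  | true, ⟨_, a, rfl⟩ => rfl
  | false, ⟨_, b, rfl⟩ => rfl

end Amal

/-- Swan's theorem: for `Γ = A *_C B` the sequence
`0 → kI_C^Γ → kI_A^Γ ⊕ kI_B^Γ → kI_Γ → 0`, with maps `z ↦ (z, -z)` and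
`(x, y) ↦ x + y`, is exact (stated elementwise). -/
theorem swan_exact_sequence
    (k : Type) [CommRing k] (A B C : Type) [Group A] [Group B] [Group C]
    (θ₁ : C →* A) (θ₂ : C →* B) :
    (amalIC k A B C θ₁ θ₂ ≤ amalIA k A B C θ₁ θ₂) ∧
    (amalIC k A B C θ₁ θ₂ ≤ amalIB k A B C θ₁ θ₂) ∧
    (amalIA k A B C θ₁ θ₂ ≤ augIdeal k (Amal A B C θ₁ θ₂)) ∧
    (amalIB k A B C θ₁ θ₂ ≤ augIdeal k (Amal A B C θ₁ θ₂)) ∧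
    (∀ x ∈ amalIA k A B C θ₁ θ₂, ∀ y ∈ amalIB k A B C θ₁ θ₂,
      (x + y = 0 ↔ ∃ z ∈ amalIC k A B C θ₁ θ₂, x = z ∧ y = -z)) ∧
    (∀ w ∈ augIdeal k (Amal A B C θ₁ θ₂),
      ∃ x ∈ amalIA k A B C θ₁ θ₂, ∃ y ∈ amalIB k A B C θ₁ θ₂, x + y = w) := by
  refine ⟨relAugIdeal_mono (Amal.base_le_factor θ₁ θ₂ true),
    relAugIdeal_mono (Amal.base_le_factor θ₁ θ₂ false),
    relAugIdeal_le_augIdeal _, relAugIdeal_le_augIdeal _, fun x hx y hy => ⟨fun hxy => ?_, ?_⟩,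
    fun w hw => ?_⟩
  · have hxB : x ∈ amalIB k A B C θ₁ θ₂ := neg_eq_of_add_eq_zero_left hxy ▸ neg_mem hy
    refine ⟨x, ?_, rfl, (neg_eq_of_add_eq_zero_right hxy).symm⟩
    exact mem_relAugIdeal_of_forall_mem (Amal.toPushoutI_apply θ₁ θ₂)
      (Bool.forall_bool.2 ⟨hxB, hx⟩)
  · rintro ⟨z, -, rfl, rfl⟩
    exact add_neg_cancel _
  · rw [← Submodule.mem_sup, amalIA, amalIB, ← relAugIdeal_union]
    exact augIdeal_le_relAugIdeal_of_closure_eq_top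
      (Amal.closure_range_inl_union_range_inr θ₁ θ₂) hw
end

section
/- Let k be a commutative ring, let F be the free group freely generated by a set S, let T ⊆ F, let N be the normal closure of T in F, let G = F/N, and let π : kF → kG be the induced ring homomorphism. For f ∈ F let ∂f/∂s ∈ kF (s ∈ S, all but finitely many zero) denote the unique Fox derivatives satisfying f − 1 = Σ_{s∈S} (∂f/∂s)(s − 1) in kF. Let kG^(S) be the free left kG-module with basis {e_s : s ∈ S} and let ∂₁ : kG^(S) → kG be the kG-linear map with ∂₁(e_s) = π(s) − 1. Then: (a) the image of ∂₁ equals the augmentation ideal kI_G; (b) the map N → kG^(S) sending r ↦ Σ_{s∈S} π(∂r/∂s)·e_s is a group homomorphism from N to the additive group of kG^(S) that vanishes on [N,N], the induced k-linear map k ⊗_ℤ (N/[N,N]) → kG^(S) is injective, and its image equals the kernel of ∂₁; in particular, the kernel of ∂₁ is the kG-submodule of kG^(S) generated by {Σ_{s∈S} π(∂t/∂s)·e_s : t ∈ T}. -/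
open scoped TensorProduct

/-- The quotient `G = F/N` of the free group on `S` by the normal closure `N` of a set
`T` of relators. -/
abbrev RelQuot (S : Type) (T : Set (FreeGroup S)) : Type :=
  FreeGroup S ⧸ Subgroup.normalClosure T

/-- The ring homomorphism `π : kF → kG` induced by the projection `F → G = F/N`. -/
noncomputable def foxPi (k S : Type) [CommRing k] (T : Set (FreeGroup S)) :
    MonoidAlgebra k (FreeGroup S) →ₐ[k] MonoidAlgebra k (RelQuot S T) :=
  MonoidAlgebra.lift k (MonoidAlgebra k (RelQuot S T)) (FreeGroup S)
    ((MonoidAlgebra.of k (RelQuot S T)).comp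
      (QuotientGroup.mk' (Subgroup.normalClosure T)))

/-- The map `∂₁ : kG^(S) → kG` sending the basis vector `e_s` to `π(s) - 1`, where
`kG^(S)` is realised as `S →₀ kG` (so `e_s = Finsupp.single s 1`). -/
noncomputable def foxD1 (k S : Type) [CommRing k] (T : Set (FreeGroup S)) :
    (S →₀ MonoidAlgebra k (RelQuot S T)) → MonoidAlgebra k (RelQuot S T) :=
  fun w => w.sum fun s c =>
    c * (MonoidAlgebra.of k (RelQuot S T) (QuotientGroup.mk (FreeGroup.of s)) - 1)

/-- The map `F → kG^(S)`, `f ↦ Σ_s π(∂f/∂s)·e_s`, built from a family `D` of Fox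
derivatives. -/
noncomputable def foxRho (k S : Type) [CommRing k] (T : Set (FreeGroup S))
    (D : FreeGroup S → (S →₀ MonoidAlgebra k (FreeGroup S))) :
    FreeGroup S → (S →₀ MonoidAlgebra k (RelQuot S T)) :=
  fun f => (D f).mapRange (foxPi k S T) (map_zero _)

/-!
Fox derivatives are the first coordinate of the lift `F →* kF^(S) ⋊ F` of `s ↦ (e_s, s)`.
The map `e_s ↦ s - 1` has the `k`-linear left inverse
`g ↦ ∂g`, so they are unique.

Pushed to `G = F/N`, `ρ r = Σ_s π(∂r/∂s) e_s` satisfies `ρ (f f') = ρ f + f̄ • ρ f'`, hence is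
additive on `N` and kills `[N, N]`, giving `ℓ : k ⊗ N_ab → kG^(S)`. With coset representatives
`out`, the Schreier elements `out g · f · out (g f̄)⁻¹ ∈ N` define
`τ : g e_s ↦ 1 ⊗ [out g · s · out (g s̄)⁻¹]` and `η : g ↦ ρ (out g)`. Then `τ ℓ = id`,
`ℓ τ + η ∂₁ = id` and `∂₁ η = id - ε`: this contracting homotopy gives injectivity of `ℓ`,
`range ℓ = ker ∂₁` and `range ∂₁ = ker ε`.
-/

noncomputable section

namespace Fox

section AugMap

variable (k : Type*) [CommRing k] {G S : Type*} [Group G]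

def augMap (x : S → G) : (S →₀ MonoidAlgebra k G) →ₗ[MonoidAlgebra k G] MonoidAlgebra k G :=
  Finsupp.linearCombination _ fun s => MonoidAlgebra.of k G (x s) - 1

variable {k}

@[simp] lemma augMap_single (x : S → G) (s : S) (c : MonoidAlgebra k G) :
    augMap k x (Finsupp.single s c) = c * (MonoidAlgebra.of k G (x s) - 1) :=
  Finsupp.linearCombination_single _ _ _

@[simp] lemma augHom_of (g : G) : augHom k G (MonoidAlgebra.of k G g) = 1 :=
  MonoidAlgebra.lift_of _ _

@[simp] lemma augHom_single (g : G) (c : k) : augHom k G (MonoidAlgebra.single g c) = c := by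
  simp [augHom, MonoidAlgebra.lift_single]

lemma augHom_augMap (x : S → G) (w : S →₀ MonoidAlgebra k G) :
    augHom k G (augMap k x w) = 0 := by
  induction w using Finsupp.induction_linear with
  | zero => simp
  | add v w hv hw => rw [map_add, map_add, hv, hw, add_zero]
  | single s c => simp

end AugMap

section FoxDeriv

variable (k S : Type*) [CommRing k]

@[ext] structure FoxPair where
  d : S →₀ MonoidAlgebra k (FreeGroup S)
  g : FreeGroup S

namespace FoxPair

variable {k S}

instance : One (FoxPair k S) := ⟨⟨0, 1⟩⟩

instance : Mul (FoxPair k S) :=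
  ⟨fun x y => ⟨x.d + MonoidAlgebra.of k (FreeGroup S) x.g • y.d, x.g * y.g⟩⟩

instance : Inv (FoxPair k S) :=
  ⟨fun x => ⟨-(MonoidAlgebra.of k (FreeGroup S) x.g⁻¹ • x.d), x.g⁻¹⟩⟩

@[simp] lemma one_d : (1 : FoxPair k S).d = 0 := rfl
@[simp] lemma one_g : (1 : FoxPair k S).g = 1 := rfl
@[simp] lemma mul_d (x y : FoxPair k S) :
    (x * y).d = x.d + MonoidAlgebra.of k (FreeGroup S) x.g • y.d := rfl
@[simp] lemma mul_g (x y : FoxPair k S) : (x * y).g = x.g * y.g := rfl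
@[simp] lemma inv_d (x : FoxPair k S) :
    x⁻¹.d = -(MonoidAlgebra.of k (FreeGroup S) x.g⁻¹ • x.d) := rfl
@[simp] lemma inv_g (x : FoxPair k S) : x⁻¹.g = x.g⁻¹ := rfl

instance : Group (FoxPair k S) where
  mul_assoc x y z :=
    FoxPair.ext (by simp only [mul_d, mul_g, map_mul, mul_smul, smul_add, add_assoc])
      (mul_assoc ..)
  one_mul x := FoxPair.ext (by simp [← MonoidAlgebra.one_def]) (one_mul _)
  mul_one x := FoxPair.ext (by simp) (mul_one _)
  inv_mul_cancel x :=
    FoxPair.ext (by simp only [mul_d, inv_d, inv_g, neg_add_cancel, one_d]) (inv_mul_cancel _)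

end FoxPair

def foxHom : FreeGroup S →* FoxPair k S :=
  FreeGroup.lift fun s => ⟨Finsupp.single s 1, FreeGroup.of s⟩

def foxDeriv (f : FreeGroup S) : S →₀ MonoidAlgebra k (FreeGroup S) := (foxHom k S f).d

variable {k S}

@[simp] lemma foxHom_g (f : FreeGroup S) : (foxHom k S f).g = f := by
  induction f using FreeGroup.induction_on with
  | C1 => simp
  | of s => simp [foxHom]
  | inv_of s ih => rw [map_inv, FoxPair.inv_g, ih]
  | mul x y ihx ihy => rw [map_mul, FoxPair.mul_g, ihx, ihy]

@[simp] lemma foxDeriv_of (s : S) : foxDeriv k S (FreeGroup.of s) = Finsupp.single s 1 := by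
  simp [foxDeriv, foxHom]

lemma foxDeriv_mul (f f' : FreeGroup S) :
    foxDeriv k S (f * f') = foxDeriv k S f + MonoidAlgebra.of k _ f • foxDeriv k S f' := by
  simp [foxDeriv]

lemma foxDeriv_inv (f : FreeGroup S) :
    foxDeriv k S f⁻¹ = -(MonoidAlgebra.of k _ f⁻¹ • foxDeriv k S f) := by
  simp [foxDeriv]

lemma augMap_foxDeriv (f : FreeGroup S) :
    augMap k FreeGroup.of (foxDeriv k S f) = MonoidAlgebra.of k _ f - 1 := by
  induction f using FreeGroup.induction_on with
  | C1 => simp [foxDeriv, MonoidAlgebra.one_def]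
  | of s => simp
  | inv_of s ih =>
    rw [foxDeriv_inv, map_neg, map_smul, ih, smul_eq_mul, mul_sub, ← map_mul, inv_mul_cancel,
      map_one, mul_one, neg_sub]
  | mul x y ihx ihy =>
    rw [foxDeriv_mul, map_add, map_smul, ihx, ihy, smul_eq_mul, map_mul]
    noncomm_ring

variable (k S) in
def foxDerivLin : MonoidAlgebra k (FreeGroup S) →ₗ[k] (S →₀ MonoidAlgebra k (FreeGroup S)) :=
  Finsupp.linearCombination k (foxDeriv k S) ∘ₗ (MonoidAlgebra.coeffLinearEquiv k).toLinearMap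

@[simp] lemma foxDerivLin_single (f : FreeGroup S) (c : k) :
    foxDerivLin k S (MonoidAlgebra.single f c) = c • foxDeriv k S f := by
  simp [foxDerivLin]

lemma foxDerivLin_augMap (w : S →₀ MonoidAlgebra k (FreeGroup S)) :
    foxDerivLin k S (augMap k FreeGroup.of w) = w := by
  induction w using Finsupp.induction_linear with
  | zero => simp
  | add v w hv hw => rw [map_add, map_add, hv, hw]
  | single s a =>
    rw [augMap_single]
    induction a using MonoidAlgebra.induction_linear with
    | zero => simp
    | add a b ha hb => rw [add_mul, map_add, ha, hb, Finsupp.single_add]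
    | single f c =>
      rw [mul_sub, mul_one, MonoidAlgebra.of_apply, MonoidAlgebra.single_mul_single, mul_one,
        map_sub, foxDerivLin_single, foxDerivLin_single, foxDeriv_mul, foxDeriv_of, smul_add,
        add_sub_cancel_left, Finsupp.smul_single, Finsupp.smul_single, smul_eq_mul, mul_one,
        MonoidAlgebra.of_apply, MonoidAlgebra.smul_single', mul_one]

/-- `{s - 1}` is a free basis of the left `kF`-module `kI_F`. -/
lemma augMap_of_injective : Function.Injective (augMap k (FreeGroup.of (α := S))) :=
  Function.LeftInverse.injective foxDerivLin_augMap

lemma eq_foxDeriv {D : FreeGroup S → S →₀ MonoidAlgebra k (FreeGroup S)}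
    (hD : ∀ f, MonoidAlgebra.of k _ f - 1 = augMap k FreeGroup.of (D f)) : D = foxDeriv k S :=
  funext fun f => augMap_of_injective (by rw [← hD, augMap_foxDeriv])

end FoxDeriv

section Schreier

lemma exists_ofMul_abelianization_of {G : Type*} [Group G] (m : Additive (Abelianization G)) :
    ∃ r : G, Additive.ofMul (Abelianization.of r) = m :=
  QuotientGroup.mk_surjective m

variable {F : Type*} [Group F] (N : Subgroup F) [N.Normal]

def schreier (g : F ⧸ N) (f : F) : N :=
  ⟨g.out * f * (g * f : F ⧸ N).out⁻¹, by
    rw [← QuotientGroup.eq_one_iff, QuotientGroup.mk_mul, QuotientGroup.mk_mul,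
      QuotientGroup.mk_inv, QuotientGroup.out_eq', QuotientGroup.out_eq', mul_inv_cancel]⟩

@[simp] lemma coe_schreier (g : F ⧸ N) (f : F) :
    (schreier N g f : F) = g.out * f * (g * f : F ⧸ N).out⁻¹ := rfl

lemma schreier_mul (g : F ⧸ N) (f f' : F) :
    schreier N g (f * f') = schreier N g f * schreier N (g * f) f' := by
  ext
  simp [mul_assoc]

lemma schreier_one (g : F ⧸ N) : schreier N g 1 = 1 := by
  ext
  simp

lemma schreier_inv (g : F ⧸ N) (f : F) :
    schreier N g f⁻¹ = (schreier N (g * (f : F ⧸ N)⁻¹) f)⁻¹ := by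
  rw [eq_inv_iff_mul_eq_one, ← schreier_one N g, ← inv_mul_cancel f, schreier_mul,
    QuotientGroup.mk_inv]

/-- `(1 : F ⧸ N).out` lies in `N`, and conjugation by an element of `N` is trivial
on `N_ab`. -/
lemma abelianization_of_schreier_one_left {r : F} (hr : r ∈ N) :
    Abelianization.of (schreier N 1 r) = Abelianization.of ⟨r, hr⟩ := by
  have hout : (1 : F ⧸ N).out ∈ N := by
    rw [← QuotientGroup.eq_one_iff, QuotientGroup.out_eq']
  have : schreier N 1 r = ⟨_, hout⟩ * ⟨r, hr⟩ * (⟨_, hout⟩)⁻¹ := by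
    ext
    simp [(QuotientGroup.eq_one_iff r).mpr hr]
  rw [this, map_mul, map_mul, map_inv, mul_inv_cancel_comm]

end Schreier

section Presentation

variable (k S : Type) [CommRing k] (T : Set (FreeGroup S))

local notation "ρ" => foxRho k S T (foxDeriv k S)

local notation "∂₁" => augMap k fun s => ((FreeGroup.of s : FreeGroup S) : RelQuot S T)

variable {S T}

@[simp] lemma foxPi_of (f : FreeGroup S) :
    foxPi k S T (MonoidAlgebra.of k _ f) = MonoidAlgebra.of k _ (f : RelQuot S T) :=
  MonoidAlgebra.lift_of _ _

lemma foxD1_eq_augMap : foxD1 k S T = ∂₁ := rfl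

lemma foxPi_augMap (w : S →₀ MonoidAlgebra k (FreeGroup S)) :
    foxPi k S T (augMap k FreeGroup.of w) = ∂₁ (w.mapRange (foxPi k S T) (map_zero _)) := by
  induction w using Finsupp.induction_linear with
  | zero => simp
  | add v w hv hw => rw [map_add, map_add, hv, hw, Finsupp.mapRange_add (map_add _), map_add]
  | single s c =>
    rw [augMap_single, Finsupp.mapRange_single, augMap_single, map_mul, map_sub, map_one, foxPi_of]

lemma augMap_foxRho (f : FreeGroup S) :
    ∂₁ (ρ f) = MonoidAlgebra.of k _ (f : RelQuot S T) - 1 := by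
  rw [foxRho, ← foxPi_augMap, augMap_foxDeriv, map_sub, map_one, foxPi_of]

@[simp] lemma foxRho_of (s : S) : ρ (FreeGroup.of s) = Finsupp.single s 1 := by
  simp [foxRho]

@[simp] lemma foxRho_one : ρ 1 = 0 := by
  simp [foxRho, foxDeriv]

lemma foxRho_mul (f f' : FreeGroup S) :
    ρ (f * f') = ρ f + MonoidAlgebra.of k _ (f : RelQuot S T) • ρ f' := by
  ext s
  simp only [foxRho, foxDeriv_mul, Finsupp.mapRange_apply, Finsupp.add_apply, Finsupp.smul_apply,
    smul_eq_mul, map_add, map_mul, foxPi_of]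

lemma foxRho_inv (f : FreeGroup S) :
    ρ f⁻¹ = -(MonoidAlgebra.of k _ (f : RelQuot S T)⁻¹ • ρ f) := by
  rw [eq_neg_iff_add_eq_zero, ← QuotientGroup.mk_inv, ← foxRho_mul, inv_mul_cancel, foxRho_one]

lemma foxRho_mul_of_mem {r : FreeGroup S} (hr : r ∈ Subgroup.normalClosure T) (f : FreeGroup S) :
    ρ (r * f) = ρ r + ρ f := by
  rw [foxRho_mul, (QuotientGroup.eq_one_iff r).mpr hr, map_one, one_smul]

lemma foxRho_mul_inv_of_mk_eq {f f' : FreeGroup S} (h : (f : RelQuot S T) = f') :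
    ρ (f * f'⁻¹) = ρ f - ρ f' := by
  rw [foxRho_mul, foxRho_inv, h, smul_neg, ← mul_smul, ← map_mul, mul_inv_cancel, map_one,
    one_smul, sub_eq_add_neg]

lemma foxRho_conj_of_mem {r : FreeGroup S} (hr : r ∈ Subgroup.normalClosure T) (f : FreeGroup S) :
    ρ (f * r * f⁻¹) = MonoidAlgebra.of k _ (f : RelQuot S T) • ρ r := by
  have hfr : ((f * r : FreeGroup S) : RelQuot S T) = f := by
    rw [QuotientGroup.mk_mul, (QuotientGroup.eq_one_iff r).mpr hr, mul_one]
  rw [foxRho_mul_inv_of_mk_eq k hfr, foxRho_mul, add_sub_cancel_left]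

lemma foxRho_inv_of_mem {r : FreeGroup S} (hr : r ∈ Subgroup.normalClosure T) : ρ r⁻¹ = -ρ r := by
  rw [foxRho_inv, (QuotientGroup.eq_one_iff r).mpr hr, inv_one, map_one, one_smul]

lemma foxRho_mem_span {r : FreeGroup S} (hr : r ∈ Subgroup.normalClosure T) :
    ρ r ∈ Submodule.span (MonoidAlgebra k (RelQuot S T)) (ρ '' T) := by
  induction hr using Subgroup.closure_induction with
  | mem x hx =>
    obtain ⟨t, ht, hconj⟩ := Group.mem_conjugatesOfSet_iff.mp hx
    obtain ⟨f, rfl⟩ := isConj_iff.mp hconj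
    rw [foxRho_conj_of_mem k (Subgroup.subset_normalClosure ht)]
    exact Submodule.smul_mem _ _ (Submodule.subset_span ⟨t, ht, rfl⟩)
  | one => simp
  | mul r r' hr _ ih ih' => exact foxRho_mul_of_mem k hr r' ▸ add_mem ih ih'
  | inv r hr ih => exact foxRho_inv_of_mem k hr ▸ neg_mem ih

variable (S T) in
def foxRhoHom :
    Subgroup.normalClosure T →* Multiplicative (S →₀ MonoidAlgebra k (RelQuot S T)) where
  toFun r := Multiplicative.ofAdd (ρ r)
  map_one' := by simp
  map_mul' r r' := foxRho_mul_of_mem k r.2 r'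

lemma foxRho_eq_zero_of_mem_commutator {r : FreeGroup S}
    (hr : r ∈ ⁅Subgroup.normalClosure T, Subgroup.normalClosure T⁆) : ρ r = 0 := by
  rw [← Subgroup.map_subtype_commutator] at hr
  obtain ⟨n, hn, rfl⟩ := hr
  exact congrArg Multiplicative.toAdd (Abelianization.commutator_subset_ker (foxRhoHom k S T) hn)

variable (S T) in
def eta : MonoidAlgebra k (RelQuot S T) →ₗ[k] (S →₀ MonoidAlgebra k (RelQuot S T)) :=
  Finsupp.linearCombination k (fun g : RelQuot S T => ρ g.out) ∘ₗ
    (MonoidAlgebra.coeffLinearEquiv k).toLinearMap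

@[simp] lemma eta_single (g : RelQuot S T) (c : k) :
    eta k S T (MonoidAlgebra.single g c) = c • ρ g.out := by
  simp [eta]

@[simp] lemma eta_of (g : RelQuot S T) : eta k S T (MonoidAlgebra.of k _ g) = ρ g.out := by
  rw [MonoidAlgebra.of_apply, eta_single, one_smul]

lemma augMap_eta (a : MonoidAlgebra k (RelQuot S T)) :
    ∂₁ (eta k S T a) = a - algebraMap k _ (augHom k (RelQuot S T) a) := by
  induction a using MonoidAlgebra.induction_linear with
  | zero => simp
  | add a b ha hb => rw [map_add, map_add, ha, hb, map_add, map_add, sub_add_sub_comm]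
  | single g c =>
    rw [eta_single, LinearMap.map_smul_of_tower, augMap_foxRho,
      QuotientGroup.out_eq', augHom_single, smul_sub, Algebra.algebraMap_eq_smul_one,
      MonoidAlgebra.of_apply, MonoidAlgebra.smul_single', mul_one]

lemma range_foxD1 :
    Set.range (foxD1 k S T) = (augIdeal k (RelQuot S T) : Set (MonoidAlgebra k (RelQuot S T))) := by
  rw [foxD1_eq_augMap k]
  ext a
  refine ⟨?_, fun ha => ⟨eta k S T a, ?_⟩⟩
  · rintro ⟨w, rfl⟩
    exact augHom_augMap _ w
  · rw [augMap_eta, (RingHom.mem_ker).mp ha, map_zero, sub_zero]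

variable (S T) in
def tau : (S →₀ MonoidAlgebra k (RelQuot S T)) →ₗ[k]
    k ⊗[ℤ] Additive (Abelianization (Subgroup.normalClosure T)) :=
  Finsupp.lsum k fun s =>
    Finsupp.linearCombination k (fun g => (1 : k) ⊗ₜ[ℤ]
      Additive.ofMul (Abelianization.of (schreier _ g (FreeGroup.of s)))) ∘ₗ
    (MonoidAlgebra.coeffLinearEquiv k).toLinearMap

@[simp] lemma tau_single_single (s : S) (g : RelQuot S T) (c : k) :
    tau k S T (Finsupp.single s (MonoidAlgebra.single g c)) =
      c ⊗ₜ[ℤ] Additive.ofMul (Abelianization.of (schreier _ g (FreeGroup.of s))) := by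
  simp [tau, TensorProduct.smul_tmul']

variable (S T) in
def ell : k ⊗[ℤ] Additive (Abelianization (Subgroup.normalClosure T)) →ₗ[k]
    (S →₀ MonoidAlgebra k (RelQuot S T)) :=
  LinearMap.liftBaseChange k
    (MonoidHom.toAdditiveLeft (Abelianization.lift (foxRhoHom k S T))).toIntLinearMap

@[simp] lemma ell_tmul (c : k) (r : Subgroup.normalClosure T) :
    ell k S T (c ⊗ₜ[ℤ] Additive.ofMul (Abelianization.of r)) = c • ρ r :=
  rfl

lemma tau_smul_foxRho (f : FreeGroup S) (g : RelQuot S T) :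
    tau k S T (MonoidAlgebra.of k _ g • ρ f) =
      (1 : k) ⊗ₜ[ℤ] Additive.ofMul (Abelianization.of (schreier _ g f)) := by
  induction f using FreeGroup.induction_on generalizing g with
  | C1 => simp [schreier_one]
  | of s =>
    rw [foxRho_of, Finsupp.smul_single, smul_eq_mul, mul_one, MonoidAlgebra.of_apply,
      tau_single_single]
  | inv_of s ih =>
    rw [foxRho_inv, smul_neg, ← mul_smul, ← map_mul, map_neg, ih, schreier_inv, map_inv,
      ofMul_inv, TensorProduct.tmul_neg]
  | mul x y ihx ihy =>
    rw [foxRho_mul, smul_add, map_add, ihx, ← mul_smul, ← map_mul, ihy, schreier_mul, map_mul,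
      ofMul_mul, TensorProduct.tmul_add]

lemma tau_foxRho_of_mem {r : FreeGroup S} (hr : r ∈ Subgroup.normalClosure T) :
    tau k S T (ρ r) = (1 : k) ⊗ₜ[ℤ] Additive.ofMul (Abelianization.of ⟨r, hr⟩) := by
  rw [← abelianization_of_schreier_one_left _ hr, ← tau_smul_foxRho, map_one, one_smul]

lemma tau_ell (x : k ⊗[ℤ] Additive (Abelianization (Subgroup.normalClosure T))) :
    tau k S T (ell k S T x) = x := by
  induction x with
  | zero => simp
  | add x y hx hy => rw [map_add, map_add, hx, hy]
  | tmul c m =>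
    obtain ⟨r, rfl⟩ := exists_ofMul_abelianization_of m
    rw [ell_tmul, map_smul, tau_foxRho_of_mem k r.2, TensorProduct.smul_tmul', smul_eq_mul, mul_one]

lemma ell_injective : Function.Injective (ell k S T) :=
  Function.LeftInverse.injective (tau_ell k)

lemma augMap_ell (x : k ⊗[ℤ] Additive (Abelianization (Subgroup.normalClosure T))) :
    ∂₁ (ell k S T x) = 0 := by
  induction x with
  | zero => simp
  | add x y hx hy => rw [map_add, map_add, hx, hy, add_zero]
  | tmul c m =>
    obtain ⟨r, rfl⟩ := exists_ofMul_abelianization_of m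
    rw [ell_tmul, LinearMap.map_smul_of_tower, augMap_foxRho,
      (QuotientGroup.eq_one_iff _).mpr r.2, map_one, sub_self, smul_zero]

lemma foxRho_schreier (g : RelQuot S T) (f : FreeGroup S) :
    ρ (schreier _ g f) = ρ g.out + MonoidAlgebra.of k _ g • ρ f - ρ (g * f : RelQuot S T).out := by
  rw [coe_schreier, foxRho_mul_inv_of_mk_eq, foxRho_mul, QuotientGroup.out_eq']
  rw [QuotientGroup.mk_mul, QuotientGroup.out_eq', QuotientGroup.out_eq']

lemma ell_tau_add_eta_augMap (w : S →₀ MonoidAlgebra k (RelQuot S T)) :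
    ell k S T (tau k S T w) + eta k S T (∂₁ w) = w := by
  induction w using Finsupp.induction_linear with
  | zero => simp
  | add v w hv hw => rw [map_add, map_add, map_add, map_add, add_add_add_comm, hv, hw]
  | single s a =>
    induction a using MonoidAlgebra.induction_linear with
    | zero => simp
    | add a b ha hb =>
      rw [Finsupp.single_add, map_add, map_add, map_add, map_add, add_add_add_comm, ha, hb]
    | single g c =>
      have hsingle : MonoidAlgebra.single g c = c • MonoidAlgebra.of k (RelQuot S T) g := by
        rw [MonoidAlgebra.of_apply, MonoidAlgebra.smul_single', mul_one]
      rw [tau_single_single, ell_tmul, foxRho_schreier, augMap_single, hsingle, smul_mul_assoc,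
        LinearMap.map_smul_of_tower, mul_sub, mul_one, ← map_mul, map_sub, eta_of, eta_of,
        ← smul_add, sub_add_sub_cancel, add_sub_cancel_left, foxRho_of, Finsupp.smul_single,
        smul_eq_mul, mul_one, Finsupp.smul_single]

lemma range_ell : Set.range (ell k S T) = {w | foxD1 k S T w = 0} := by
  rw [foxD1_eq_augMap k]
  ext w
  refine ⟨?_, fun hw => ⟨tau k S T w, ?_⟩⟩
  · rintro ⟨x, rfl⟩
    exact augMap_ell k x
  · simpa [Set.mem_ofPred_eq.mp hw] using ell_tau_add_eta_augMap k w

lemma ker_foxD1_eq_span :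
    {w | foxD1 k S T w = 0} =
      (Submodule.span (MonoidAlgebra k (RelQuot S T)) (ρ '' T) : Set (S →₀ _)) := by
  refine le_antisymm ?_ ?_
  · rw [← range_ell]
    rintro _ ⟨x, rfl⟩
    induction x with
    | zero => simp
    | add x y hx hy => rw [map_add]; exact add_mem hx hy
    | tmul c m =>
      obtain ⟨r, rfl⟩ := exists_ofMul_abelianization_of m
      rw [ell_tmul]
      exact Submodule.smul_of_tower_mem _ c (foxRho_mem_span k r.2)
  · rw [foxD1_eq_augMap k]
    refine Submodule.span_le (p := LinearMap.ker (∂₁)).mpr ?_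
    rintro _ ⟨t, ht, rfl⟩
    rw [SetLike.mem_coe, LinearMap.mem_ker, augMap_foxRho,
      (QuotientGroup.eq_one_iff t).mpr (Subgroup.subset_normalClosure ht), map_one, sub_self]

end Presentation

end Fox

/-- The free presentation of the augmentation ideal via Fox derivatives: with
`N = ⟪T⟫ ⊴ F = FreeGroup S`, `G = F/N`, and `D` the family of Fox derivatives
(`hD` states the defining property `f - 1 = Σ_s (∂f/∂s)(s - 1)`):
(a) the image of `∂₁` is the augmentation ideal `kI_G`;
(b) `r ↦ Σ_s π(∂r/∂s)·e_s` is additive on `N`, vanishes on `[N, N]`, induces an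
injective `k`-linear map `k ⊗_ℤ N_{ab} → kG^(S)` whose image is the kernel of `∂₁`;
in particular the kernel of `∂₁` is the `kG`-submodule generated by the images of the
relators `t ∈ T`. -/
theorem fox_relation_module
    (k S : Type) [CommRing k] (T : Set (FreeGroup S))
    (D : FreeGroup S → (S →₀ MonoidAlgebra k (FreeGroup S)))
    (hD : ∀ f : FreeGroup S,
      MonoidAlgebra.of k (FreeGroup S) f - 1 =
        (D f).sum fun s c =>
          c * (MonoidAlgebra.of k (FreeGroup S) (FreeGroup.of s) - 1)) :
    -- (a) the image of `∂₁` is the augmentation ideal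
    (Set.range (foxD1 k S T) =
      (augIdeal k (RelQuot S T) : Set (MonoidAlgebra k (RelQuot S T)))) ∧
    -- (b) `ρ : r ↦ Σ_s π(∂r/∂s) e_s` is additive on `N` ...
    (∀ r r' : FreeGroup S,
      r ∈ Subgroup.normalClosure T → r' ∈ Subgroup.normalClosure T →
        foxRho k S T D (r * r') = foxRho k S T D r + foxRho k S T D r') ∧
    -- ... vanishes on `[N, N]` ...
    (∀ r ∈ (⁅Subgroup.normalClosure T, Subgroup.normalClosure T⁆ :
        Subgroup (FreeGroup S)), foxRho k S T D r = 0) ∧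
    -- ... and induces an injective `k`-linear map `k ⊗_ℤ N_ab → kG^(S)` with image
    -- the kernel of `∂₁`
    (∃ ℓ : TensorProduct ℤ k (Additive (Abelianization ↥(Subgroup.normalClosure T)))
        →ₗ[k] (S →₀ MonoidAlgebra k (RelQuot S T)),
      (∀ (c : k) (r : ↥(Subgroup.normalClosure T)),
        ℓ (c ⊗ₜ[ℤ] Additive.ofMul (Abelianization.of r)) =
          c • foxRho k S T D (r : FreeGroup S)) ∧
      Function.Injective ℓ ∧
      Set.range ℓ = {w | foxD1 k S T w = 0}) ∧
    -- in particular, the kernel of `∂₁` is generated as a `kG`-module by the images of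
    -- the relators
    ({w | foxD1 k S T w = 0} =
      (Submodule.span (MonoidAlgebra k (RelQuot S T)) (foxRho k S T D '' T) :
        Set (S →₀ MonoidAlgebra k (RelQuot S T)))) := by
  obtain rfl : D = Fox.foxDeriv k S := Fox.eq_foxDeriv fun f => hD f
  exact ⟨Fox.range_foxD1 k, fun r r' hr _ => Fox.foxRho_mul_of_mem k hr r',
    fun r hr => Fox.foxRho_eq_zero_of_mem_commutator k hr,
    ⟨Fox.ell k S T, Fox.ell_tmul k, Fox.ell_injective k, Fox.range_ell k⟩,
    Fox.ker_foxD1_eq_span k⟩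
end
end

section
/- Free groups are residually-(torsion-free nilpotent): if F is a free group and g ∈ F is a nontrivial element, then there exists a normal subgroup N of F such that g ∉ N and the quotient F/N is nilpotent and torsion-free. -/
/-!
The Magnus embedding. Let `A` be the ring of noncommutative polynomials over `ℤ` in variables
`X_y`, truncated at words of length `n`, and `Aʲ` the ideal spanned by words of length `≥ j`.
The units `1 + A¹` form a group filtered by the subgroups `1 + Aʲ`: the commutator of
`u ∈ 1 + Aʲ` with `v ∈ 1 + A¹` lies in `1 + Aʲ⁺¹`, so the group is nilpotent; and for
`u ∈ 1 + Aʲ`, `j ≥ 1`, `uᵏ - 1 ≡ k (u - 1)` modulo `Aʲ⁺¹`, so, `ℤ` being torsion-free, it is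
torsion-free.

Send a generator `a` of the free group to `(1 + X_{(a,0)}) (1 + X_{(a,1)})`. A reduced word of
length `m` then maps to a product of `2m` factors `(1 + X_y)^{±1}` in which consecutive
variables differ, even where the word repeats a letter; the coefficient of the word formed by
these variables is therefore a product of `±1`s, so with `n = 2m` the image is not `1`.
-/

/-- The old Mathlib `Monoid.IsTorsionFree` (removed since), restored with its old meaning. -/
def Monoid.IsTorsionFree (G : Type*) [Monoid G] : Prop :=
  ∀ g : G, g ≠ 1 → ¬IsOfFinOrder g

open Finset
open scoped commutatorElement
open Polynomial (X)

theorem Monoid.IsTorsionFree.of_injective {G H : Type*} [Monoid G] [Monoid H]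
    (hH : Monoid.IsTorsionFree H) (f : G →* H) (hf : Function.Injective f) :
    Monoid.IsTorsionFree G := fun g hg hfin =>
  hH (f g) ((map_ne_one_iff f hf).mpr hg) (f.isOfFinOrder hfin)

structure DecreasingRingFiltration (R : Type*) [Ring R] where
  level : ℕ → AddSubgroup R
  level_zero : level 0 = ⊤
  antitone : Antitone level
  mul_mem {i j : ℕ} {x y : R} : x ∈ level i → y ∈ level j → x * y ∈ level (i + j)

namespace DecreasingRingFiltration

variable {R : Type*} [Ring R] (F : DecreasingRingFiltration R)

theorem mem_level_zero (x : R) : x ∈ F.level 0 := F.level_zero ▸ AddSubgroup.mem_top x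

theorem mul_mem_left (r : R) {j : ℕ} {x : R} (hx : x ∈ F.level j) : r * x ∈ F.level j := by
  simpa using F.mul_mem (F.mem_level_zero r) hx

theorem mul_mem_right {j : ℕ} {x : R} (hx : x ∈ F.level j) (r : R) : x * r ∈ F.level j :=
  F.mul_mem hx (F.mem_level_zero r)

theorem pow_mem {x : R} (hx : x ∈ F.level 1) (k : ℕ) : x ^ k ∈ F.level k := by
  induction k with
  | zero => exact F.mem_level_zero _
  | succ k ih => rw [pow_succ]; exact F.mul_mem ih hx

def unitsLevel (j : ℕ) : Subgroup Rˣ where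
  carrier := {u | (u : R) - 1 ∈ F.level j}
  one_mem' := by simp
  mul_mem' {u v} hu hv := by
    have : ((u * v : Rˣ) : R) - 1 = (u - 1) * (v - 1) + (u - 1) + (v - 1) := by
      simp only [Units.val_mul]; noncomm_ring
    simp only [Set.mem_ofPred_eq, this]
    exact add_mem (add_mem (F.mul_mem_right hu _) hu) hv
  inv_mem' {u} hu := by
    have : ((u⁻¹ : Rˣ) : R) - 1 = -((u⁻¹ : Rˣ) * ((u : R) - 1)) := by
      rw [mul_sub, Units.inv_mul, mul_one, neg_sub]
    simp only [Set.mem_ofPred_eq, this]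
    exact neg_mem (F.mul_mem_left _ hu)

variable {F}

theorem mem_unitsLevel {j : ℕ} {u : Rˣ} : u ∈ F.unitsLevel j ↔ (u : R) - 1 ∈ F.level j :=
  Iff.rfl

theorem commutator_mem_unitsLevel_succ {j : ℕ} {u v : Rˣ} (hu : u ∈ F.unitsLevel j)
    (hv : v ∈ F.unitsLevel 1) : ⁅u, v⁆ ∈ F.unitsLevel (j + 1) := by
  have key : ((⁅u, v⁆ : Rˣ) : R) - 1 =
      (((u : R) - 1) * ((v : R) - 1) - ((v : R) - 1) * ((u : R) - 1)) * ((v * u)⁻¹ : Rˣ) := by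
    have hcomm : ⁅u, v⁆ = u * v * (v * u)⁻¹ := by rw [commutatorElement_def]; group
    have hinv : (v : R) * u * ((v * u)⁻¹ : Rˣ) = 1 := by rw [← Units.val_mul, Units.mul_inv]
    rw [hcomm, Units.val_mul, Units.val_mul]
    calc (u : R) * v * ((v * u)⁻¹ : Rˣ) - 1
        = (u * v - v * u) * ((v * u)⁻¹ : Rˣ) + ((v : R) * u * ((v * u)⁻¹ : Rˣ) - 1) := by
          noncomm_ring
      _ = _ := by rw [hinv, sub_self, add_zero]; noncomm_ring
  rw [mem_unitsLevel, key]
  refine F.mul_mem_right (sub_mem (F.mul_mem hu hv) ?_) _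
  simpa [add_comm] using F.mul_mem hv hu

theorem eq_one_of_mem_unitsLevel {n : ℕ} (hn : F.level n = ⊥) {u : Rˣ}
    (hu : u ∈ F.unitsLevel n) : u = 1 := by
  rw [mem_unitsLevel, hn, AddSubgroup.mem_bot, sub_eq_zero] at hu
  exact Units.ext hu

theorem isNilpotent_unitsLevel_one {n : ℕ} (hn : F.level (n + 1) = ⊥) :
    Group.IsNilpotent (F.unitsLevel 1) := by
  rw [Subgroup.nilpotent_iff_finite_descending_central_series]
  refine ⟨n, fun k => (F.unitsLevel (k + 1)).subgroupOf (F.unitsLevel 1),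
    ⟨Subgroup.subgroupOf_self _, fun u k hu v => ?_⟩, eq_bot_iff.mpr fun u hu => ?_⟩
  · exact Subgroup.mem_subgroupOf.mpr (commutator_mem_unitsLevel_succ hu v.2)
  · exact Subgroup.mem_bot.mpr (Subtype.ext (eq_one_of_mem_unitsLevel hn hu))

theorem mem_unitsLevel_succ_of_pow_eq_one {j k : ℕ} (hj : 1 ≤ j)
    (htf : ∀ x : R, k • x ∈ F.level (j + 1) → x ∈ F.level (j + 1)) {u : Rˣ}
    (hu : u ∈ F.unitsLevel j) (hpow : u ^ k = 1) : u ∈ F.unitsLevel (j + 1) := by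
  set a : R := u - 1
  have hpow_sub (i : ℕ) : (u : R) ^ i - 1 = (∑ l ∈ range i, (u : R) ^ l) * a :=
    (geom_sum_mul _ _).symm
  have expand : (u : R) ^ k - 1 = k • a + ∑ i ∈ range k, (∑ l ∈ range i, (u : R) ^ l) * a * a :=
    calc (u : R) ^ k - 1 = ∑ i ∈ range k, (u : R) ^ i * a := by rw [← sum_mul, geom_sum_mul]
      _ = ∑ i ∈ range k, (((u : R) ^ i - 1) * a + a) := sum_congr rfl fun i _ => by noncomm_ring
      _ = _ := by simp only [sum_add_distrib, sum_const, card_range, hpow_sub, add_comm]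
  have hka : k • a = -∑ i ∈ range k, (∑ l ∈ range i, (u : R) ^ l) * a * a := by
    rw [← Units.val_pow_eq_pow_val, hpow, Units.val_one, sub_self] at expand
    exact eq_neg_of_add_eq_zero_left expand.symm
  refine htf a (hka ▸ neg_mem (sum_mem fun i _ => F.antitone (by omega : j + 1 ≤ j + j) ?_))
  exact F.mul_mem (F.mul_mem_left _ hu) hu

theorem isTorsionFree_unitsLevel_one {n : ℕ} (hn : F.level (n + 1) = ⊥)
    (htf : ∀ j (k : ℕ) (x : R), k ≠ 0 → k • x ∈ F.level j → x ∈ F.level j) :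
    Monoid.IsTorsionFree (F.unitsLevel 1) := by
  intro u hu hfin
  obtain ⟨k, hk, hpow⟩ := isOfFinOrder_iff_pow_eq_one.mp hfin
  have hpow' : (u : Rˣ) ^ k = 1 := by simpa using congrArg Subtype.val hpow
  have hmem : ∀ j, 1 ≤ j → (u : Rˣ) ∈ F.unitsLevel j := by
    intro j hj
    induction j, hj using Nat.le_induction with
    | base => exact u.2
    | succ j hj ih =>
      exact mem_unitsLevel_succ_of_pow_eq_one hj (fun x => htf _ k x hk.ne') ih hpow'
  exact hu (Subtype.ext (eq_one_of_mem_unitsLevel hn (hmem (n + 1) (by omega))))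

end DecreasingRingFiltration

section FreeAlgebra

variable {β : Type*}

theorem FreeMonoid.of_pow (y : β) (k : ℕ) :
    FreeMonoid.of y ^ k = .ofList (List.replicate k y) := by
  induction k with
  | zero => rfl
  | succ k ih => rw [pow_succ, ih, List.replicate_succ', FreeMonoid.ofList_append]; rfl

theorem List.IsChain.ne_replicate {l : List β} (hl : l.IsChain (· ≠ ·)) (h2 : 2 ≤ l.length)
    (k : ℕ) (y : β) : l ≠ List.replicate k y := by
  obtain ⟨a, b, t, rfl⟩ : ∃ a b t, l = a :: b :: t := by
    match l, h2 with
    | a :: b :: t, _ => exact ⟨a, b, t, rfl⟩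
  intro h
  have ha : a = y := List.eq_of_mem_replicate (h ▸ List.mem_cons_self ..)
  have hb : b = y := List.eq_of_mem_replicate (h ▸ List.mem_cons_of_mem _ (List.mem_cons_self ..))
  exact (List.isChain_cons_cons.mp hl).1 (ha.trans hb.symm)

theorem MonoidAlgebra.coeff_mul_freeMonoid_ofList {k : Type*} [Semiring k]
    (f g : MonoidAlgebra k (FreeMonoid β)) (l : List β) :
    (f * g).coeff (.ofList l) = ∑ i ∈ range (l.length + 1),
      f.coeff (.ofList (l.take i)) * g.coeff (.ofList (l.drop i)) := by
  classical
  let split (i : ℕ) : FreeMonoid β × FreeMonoid β := (.ofList (l.take i), .ofList (l.drop i))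
  have hsplit : Set.InjOn split (range (l.length + 1)) := fun i hi j hj hij => by
    have := congrArg (fun p => (FreeMonoid.toList p.1).length) hij
    simp only [split, FreeMonoid.toList_ofList, List.length_take, coe_range, Set.mem_Iio]
      at this hi hj
    omega
  rw [MonoidAlgebra.coeff_mul_antidiag f g _ ((range (l.length + 1)).image split),
    sum_image hsplit]
  rintro ⟨p₁, p₂⟩
  simp only [mem_image, mem_range, split, Prod.mk.injEq]
  constructor
  · rintro ⟨i, -, rfl, rfl⟩
    rw [← FreeMonoid.ofList_append, List.take_append_drop]
  · intro h
    have hl : p₁.toList ++ p₂.toList = l := by rw [← FreeMonoid.toList_mul, h]; rfl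
    refine ⟨p₁.toList.length, by simp [← hl], ?_, ?_⟩ <;> simp [← hl]

noncomputable def letterEval (y : β) : Polynomial ℤ →ₐ[ℤ] MonoidAlgebra ℤ (FreeMonoid β) :=
  Polynomial.aeval (MonoidAlgebra.of ℤ (FreeMonoid β) (FreeMonoid.of y))

theorem letterEval_monomial (y : β) (k : ℕ) (c : ℤ) :
    letterEval y (Polynomial.monomial k c) =
      MonoidAlgebra.single (.ofList (List.replicate k y)) c := by
  rw [letterEval, Polynomial.aeval_monomial, MonoidAlgebra.of_apply, MonoidAlgebra.single_pow,
    Algebra.algebraMap_eq_smul_one, smul_mul_assoc, one_mul, MonoidAlgebra.smul_single', one_pow,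
    mul_one, FreeMonoid.of_pow]

theorem coeff_letterEval_replicate (y : β) (p : Polynomial ℤ) (k : ℕ) :
    (letterEval y p).coeff (.ofList (List.replicate k y)) = p.coeff k := by
  induction p using Polynomial.induction_on' with
  | add p q hp hq => simp [hp, hq]
  | monomial i c =>
    classical
    rw [letterEval_monomial, MonoidAlgebra.coeff_single, Finsupp.single_apply,
      Polynomial.coeff_monomial]
    simp

theorem coeff_letterEval_eq_zero (y : β) (p : Polynomial ℤ) {l : List β}
    (hl : ∀ k, l ≠ List.replicate k y) : (letterEval y p).coeff (.ofList l) = 0 := by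
  induction p using Polynomial.induction_on' with
  | add p q hp hq => simp [hp, hq]
  | monomial i c =>
    classical
    rw [letterEval_monomial, MonoidAlgebra.coeff_single, Finsupp.single_apply, if_neg]
    exact fun h => hl i (congrArg FreeMonoid.toList h).symm

noncomputable def letterProd (ps : List (β × Polynomial ℤ)) : MonoidAlgebra ℤ (FreeMonoid β) :=
  (ps.map fun p => letterEval p.1 p.2).prod

@[simp]
theorem letterProd_nil : letterProd ([] : List (β × Polynomial ℤ)) = 1 := rfl

@[simp]
theorem letterProd_cons (p : β × Polynomial ℤ) (ps : List (β × Polynomial ℤ)) :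
    letterProd (p :: ps) = letterEval p.1 p.2 * letterProd ps := by
  simp [letterProd]

theorem letterProd_append (ps qs : List (β × Polynomial ℤ)) :
    letterProd (ps ++ qs) = letterProd ps * letterProd qs := by
  simp [letterProd]

theorem coeff_letterProd_eq_zero_of_length_lt (ps : List (β × Polynomial ℤ)) {l : List β}
    (hl : l.IsChain (· ≠ ·)) (hlen : ps.length < l.length) :
    (letterProd ps).coeff (.ofList l) = 0 := by
  induction ps generalizing l with
  | nil =>
    classical
    rw [letterProd_nil, MonoidAlgebra.one_def, MonoidAlgebra.coeff_single, Finsupp.single_apply,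
      if_neg]
    intro h
    rw [show l = [] from (congrArg FreeMonoid.toList h).symm, List.length_nil] at hlen
    exact Nat.not_lt_zero _ hlen
  | cons p ps ih =>
    rw [letterProd_cons, MonoidAlgebra.coeff_mul_freeMonoid_ofList]
    refine sum_eq_zero fun i hi => ?_
    rw [mem_range] at hi
    by_cases hi1 : i ≤ 1
    · rw [ih (hl.drop i) (by simp only [List.length_cons, List.length_drop] at hlen ⊢; omega),
        mul_zero]
    · have hi2 : 2 ≤ (l.take i).length := by simp at hlen ⊢; omega
      rw [coeff_letterEval_eq_zero _ _ fun k => (hl.take i).ne_replicate hi2 k p.1, zero_mul]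

theorem coeff_letterProd_map_fst (ps : List (β × Polynomial ℤ))
    (hps : (ps.map Prod.fst).IsChain (· ≠ ·)) :
    (letterProd ps).coeff (.ofList (ps.map Prod.fst)) = (ps.map fun p => p.2.coeff 1).prod := by
  induction ps with
  | nil => exact MonoidAlgebra.coeff_one_one
  | cons p ps ih =>
    rw [letterProd_cons, MonoidAlgebra.coeff_mul_freeMonoid_ofList,
      sum_eq_single_of_mem 1 (by simp)]
    · rw [List.map_cons, List.map_cons, List.prod_cons, List.take_one, List.drop_one,
        List.tail_cons, List.head?_cons, Option.toList_some, ← List.replicate_one,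
        coeff_letterEval_replicate, ih hps.tail]
    · intro i hi hi1
      rw [mem_range, List.length_map, List.length_cons] at hi
      obtain rfl | hi2 : i = 0 ∨ 2 ≤ i := by omega
      · rw [List.drop_zero, coeff_letterProd_eq_zero_of_length_lt ps hps (by simp), mul_zero]
      · have hi2' : 2 ≤ ((p :: ps).map Prod.fst |>.take i).length := by simp; omega
        rw [coeff_letterEval_eq_zero _ _ fun k => (hps.take i).ne_replicate hi2' k p.1, zero_mul]

end FreeAlgebra

def truncCon (β : Type*) (n : ℕ) : RingCon (MonoidAlgebra ℤ (FreeMonoid β)) where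
  r f g := ∀ l : List β, l.length ≤ n → f.coeff (.ofList l) = g.coeff (.ofList l)
  iseqv := ⟨fun _ _ _ => rfl, fun h l hl => (h l hl).symm,
    fun h h' l hl => (h l hl).trans (h' l hl)⟩
  add' h h' l hl := by simp [h l hl, h' l hl]
  mul' h h' l hl := by
    simp only [MonoidAlgebra.coeff_mul_freeMonoid_ofList]
    refine sum_congr rfl fun i _ => ?_
    rw [h _ (by rw [List.length_take]; omega), h' _ (by rw [List.length_drop]; omega)]

abbrev TruncFreeAlg (β : Type*) (n : ℕ) := (truncCon β n).Quotient

namespace TruncFreeAlg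

variable {β : Type*} {n : ℕ}

def coeff (l : List β) : TruncFreeAlg β n →+ ℤ where
  toFun := Quot.lift (fun f => if l.length ≤ n then f.coeff (.ofList l) else 0) fun f g h => by
    split_ifs with hl
    exacts [h l hl, rfl]
  map_zero' := show ite _ _ _ = 0 by simp
  map_add' := by
    rintro ⟨f⟩ ⟨g⟩
    show ite _ _ _ = ite _ _ _ + ite _ _ _
    split_ifs <;> simp

theorem coeff_mk (l : List β) (f : MonoidAlgebra ℤ (FreeMonoid β)) :
    coeff l ((truncCon β n).mk' f) = if l.length ≤ n then f.coeff (.ofList l) else 0 := rfl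

theorem coeff_eq_zero_of_lt {l : List β} (hl : n < l.length) (x : TruncFreeAlg β n) :
    coeff l x = 0 := by
  obtain ⟨f, rfl⟩ := (truncCon β n).mk'_surjective x
  rw [coeff_mk, if_neg (by omega)]

theorem ext_coeff {x y : TruncFreeAlg β n}
    (h : ∀ l : List β, l.length ≤ n → coeff l x = coeff l y) : x = y := by
  obtain ⟨f, rfl⟩ := (truncCon β n).mk'_surjective x
  obtain ⟨g, rfl⟩ := (truncCon β n).mk'_surjective y
  refine (RingCon.eq _).mpr fun l hl => ?_
  simpa only [coeff_mk, if_pos hl] using h l hl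

theorem coeff_mul {l : List β} (hl : l.length ≤ n) (x y : TruncFreeAlg β n) :
    coeff l (x * y) = ∑ i ∈ range (l.length + 1), coeff (l.take i) x * coeff (l.drop i) y := by
  obtain ⟨f, rfl⟩ := (truncCon β n).mk'_surjective x
  obtain ⟨g, rfl⟩ := (truncCon β n).mk'_surjective y
  rw [← map_mul, coeff_mk, if_pos hl, MonoidAlgebra.coeff_mul_freeMonoid_ofList]
  refine sum_congr rfl fun i _ => ?_
  rw [coeff_mk, coeff_mk, if_pos (by rw [List.length_take]; omega),
    if_pos (by rw [List.length_drop]; omega)]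

theorem coeff_one_of_ne_nil {l : List β} (hl : l ≠ []) : coeff l (1 : TruncFreeAlg β n) = 0 := by
  classical
  rw [← map_one (truncCon β n).mk', coeff_mk, MonoidAlgebra.one_def, MonoidAlgebra.coeff_single,
    Finsupp.single_apply, if_neg (show (1 : FreeMonoid β) ≠ .ofList l from hl.symm), ite_self]

noncomputable def level (j : ℕ) : AddSubgroup (TruncFreeAlg β n) :=
  ⨅ (l : List β) (_ : l.length < j), (coeff l).ker

theorem mem_level {j : ℕ} {x : TruncFreeAlg β n} :
    x ∈ level j ↔ ∀ l : List β, l.length < j → coeff l x = 0 := by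
  simp [level]

theorem mul_mem_level {i j : ℕ} {x y : TruncFreeAlg β n} (hx : x ∈ level i) (hy : y ∈ level j) :
    x * y ∈ level (i + j) := by
  rw [mem_level] at *
  intro l hl
  rcases le_or_gt l.length n with hln | hln
  · rw [coeff_mul hln]
    refine sum_eq_zero fun k hk => ?_
    rw [mem_range] at hk
    rcases lt_or_ge k i with hki | hki
    · rw [hx _ (by rw [List.length_take]; omega), zero_mul]
    · rw [hy _ (by rw [List.length_drop]; omega), mul_zero]
  · exact coeff_eq_zero_of_lt hln _

theorem level_succ_eq_bot : (level (n + 1) : AddSubgroup (TruncFreeAlg β n)) = ⊥ := by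
  refine eq_bot_iff.mpr fun x hx => ?_
  rw [mem_level] at hx
  exact AddSubgroup.mem_bot.mpr (ext_coeff fun l hl => by rw [hx l (by omega), map_zero])

theorem mem_level_of_nsmul_mem {j k : ℕ} (hk : k ≠ 0) {x : TruncFreeAlg β n}
    (hx : k • x ∈ level j) : x ∈ level j := by
  rw [mem_level] at *
  intro l hl
  have := hx l hl
  rwa [map_nsmul, smul_eq_zero, or_iff_right hk] at this

end TruncFreeAlg

open TruncFreeAlg in
noncomputable def truncFiltration (β : Type*) (n : ℕ) :
    DecreasingRingFiltration (TruncFreeAlg β n) where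
  level := level
  level_zero := by ext; simp [mem_level]
  antitone _ _ hij _ hx := mem_level.mpr fun l hl => mem_level.mp hx l (by omega)
  mul_mem := mul_mem_level

instance (β : Type*) (n : ℕ) : Group.IsNilpotent ((truncFiltration β n).unitsLevel 1) :=
  DecreasingRingFiltration.isNilpotent_unitsLevel_one TruncFreeAlg.level_succ_eq_bot

theorem isTorsionFree_truncFiltration_unitsLevel_one (β : Type*) (n : ℕ) :
    Monoid.IsTorsionFree ((truncFiltration β n).unitsLevel 1) :=
  DecreasingRingFiltration.isTorsionFree_unitsLevel_one TruncFreeAlg.level_succ_eq_bot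
    fun _ _ _ hk => TruncFreeAlg.mem_level_of_nsmul_mem hk

section LetterUnits

variable {β : Type*}

theorem mk'_letterEval_X_mem_level_one (n : ℕ) (y : β) :
    (truncCon β n).mk' (letterEval y X) ∈ (truncFiltration β n).level 1 := by
  refine TruncFreeAlg.mem_level.mpr fun l hl => ?_
  rw [List.length_eq_zero_iff.mp (show l.length = 0 by omega), TruncFreeAlg.coeff_mk,
    ← List.replicate_zero (a := y), coeff_letterEval_replicate]
  simp

theorem mk'_letterEval_neg_X_pow (n : ℕ) (y : β) :
    (truncCon β n).mk' (letterEval y ((-X) ^ (n + 1))) = 0 := by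
  rw [map_pow, map_pow, map_neg, map_neg, ← AddSubgroup.mem_bot,
    ← TruncFreeAlg.level_succ_eq_bot]
  exact (truncFiltration β n).pow_mem (neg_mem (mk'_letterEval_X_mem_level_one n y)) _

noncomputable def invOneAddX (n : ℕ) : Polynomial ℤ := ∑ i ∈ range (n + 1), (-X) ^ i

theorem coeff_one_invOneAddX {n : ℕ} (hn : 1 ≤ n) : (invOneAddX n).coeff 1 = -1 := by
  rw [invOneAddX, Polynomial.finsetSum_coeff, sum_eq_single_of_mem 1 (by simp; omega)]
  · simp
  · intro i _ hi
    rw [neg_pow, ← Polynomial.C_1, ← Polynomial.C_neg, ← Polynomial.C_pow,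
      Polynomial.coeff_C_mul_X_pow, if_neg (Ne.symm hi)]

noncomputable def letterUnit (n : ℕ) (y : β) : (TruncFreeAlg β n)ˣ where
  val := (truncCon β n).mk' (letterEval y (1 + X))
  inv := (truncCon β n).mk' (letterEval y (invOneAddX n))
  val_inv := by
    rw [← map_mul, ← map_mul, show (1 : Polynomial ℤ) + X = 1 - -X by ring, invOneAddX,
      mul_neg_geom_sum, map_sub, map_sub, mk'_letterEval_neg_X_pow, map_one, map_one, sub_zero]
  inv_val := by
    rw [← map_mul, ← map_mul, show (1 : Polynomial ℤ) + X = 1 - -X by ring, invOneAddX,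
      geom_sum_mul_neg, map_sub, map_sub, mk'_letterEval_neg_X_pow, map_one, map_one, sub_zero]

theorem letterUnit_mem_unitsLevel_one (n : ℕ) (y : β) :
    letterUnit n y ∈ (truncFiltration β n).unitsLevel 1 := by
  rw [DecreasingRingFiltration.mem_unitsLevel]
  simpa [letterUnit] using mk'_letterEval_X_mem_level_one n y

end LetterUnits

noncomputable def magnusHom (α : Type*) (n : ℕ) :
    FreeGroup α →* (truncFiltration (α × Bool) n).unitsLevel 1 :=
  FreeGroup.lift fun a => ⟨letterUnit n (a, false) * letterUnit n (a, true),
    mul_mem (letterUnit_mem_unitsLevel_one n _) (letterUnit_mem_unitsLevel_one n _)⟩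

section Magnus

variable {α : Type*}

noncomputable def magnusFactors (n : ℕ) (L : List (α × Bool)) :
    List ((α × Bool) × Polynomial ℤ) :=
  L.flatMap fun p =>
    [((p.1, !p.2), cond p.2 (1 + X) (invOneAddX n)), (p, cond p.2 (1 + X) (invOneAddX n))]

theorem val_magnusHom_mk (n : ℕ) (L : List (α × Bool)) :
    ((magnusHom α n (FreeGroup.mk L) : (TruncFreeAlg (α × Bool) n)ˣ) : TruncFreeAlg (α × Bool) n) =
      (truncCon _ n).mk' (letterProd (magnusFactors n L)) := by
  induction L with
  | nil => simp [magnusFactors]; rfl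
  | cons p L ih =>
    have hmk : FreeGroup.mk (p :: L) = FreeGroup.mk [p] * FreeGroup.mk L := by
      rw [FreeGroup.mul_mk, List.singleton_append]
    have hfac : magnusFactors n (p :: L) = magnusFactors n [p] ++ magnusFactors n L := by
      simp [magnusFactors]
    rw [hmk, map_mul, Subgroup.coe_mul, Units.val_mul, ih, hfac, letterProd_append, map_mul]
    congr 1
    obtain ⟨a, _ | _⟩ := p <;> simp [magnusHom, FreeGroup.lift_mk, letterUnit, magnusFactors]

theorem isChain_map_fst_magnusFactors {L : List (α × Bool)} (hL : FreeGroup.IsReduced L)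
    (n : ℕ) : ((magnusFactors n L).map Prod.fst).IsChain (· ≠ ·) := by
  have hfst : (magnusFactors n L).map Prod.fst = (L.map fun p => [(p.1, !p.2), p]).flatten := by
    simp [magnusFactors, List.flatMap_def, Function.comp_def]
  rw [hfst, List.isChain_flatten (by simp)]
  refine ⟨fun l hl => ?_, (List.isChain_map _).mpr (hL.imp fun p q hpq => ?_)⟩
  · obtain ⟨⟨a, b⟩, -, rfl⟩ := List.mem_map.mp hl
    simp
  · simp only [List.getLast?_cons_cons, List.getLast?_singleton, List.head?_cons, Option.mem_def,
      Option.some.injEq]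
    rintro _ rfl _ rfl h
    simp_all

theorem coeff_one_ne_zero_of_mem_magnusFactors {n : ℕ} (hn : 1 ≤ n) {L : List (α × Bool)}
    {q : (α × Bool) × Polynomial ℤ} (hq : q ∈ magnusFactors n L) : q.2.coeff 1 ≠ 0 := by
  obtain ⟨⟨a, _ | _⟩, -, hq⟩ := List.mem_flatMap.mp hq <;>
    obtain rfl | rfl := List.mem_pair.mp hq <;>
    simp [coeff_one_invOneAddX hn, Polynomial.coeff_one]

theorem magnusHom_ne_one [DecidableEq α] {g : FreeGroup α} (hg : g ≠ 1) :
    magnusHom α (2 * g.toWord.length) g ≠ 1 := by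
  set L := g.toWord
  set n := 2 * L.length
  set ps := magnusFactors n L
  have hlen : ps.length = n := by simp [ps, n, magnusFactors, List.length_flatMap, mul_comm]
  have hn : 1 ≤ n := by
    have : 0 < L.length := List.length_pos_of_ne_nil (mt FreeGroup.toWord_eq_nil_iff.mp hg)
    omega
  have hcoeff : TruncFreeAlg.coeff (ps.map Prod.fst)
      ((magnusHom α n g : (TruncFreeAlg (α × Bool) n)ˣ) : TruncFreeAlg (α × Bool) n) =
        (ps.map fun p => p.2.coeff 1).prod := by
    rw [← FreeGroup.mk_toWord (x := g), val_magnusHom_mk, TruncFreeAlg.coeff_mk,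
      if_pos (by rw [List.length_map, hlen]),
      coeff_letterProd_map_fst _ (isChain_map_fst_magnusFactors FreeGroup.isReduced_toWord n)]
  have hprod : (ps.map fun p => p.2.coeff 1).prod ≠ 0 := List.prod_ne_zero fun h => by
    obtain ⟨q, hq, hq0⟩ := List.mem_map.mp h
    exact coeff_one_ne_zero_of_mem_magnusFactors hn hq hq0
  intro h1
  rw [h1, OneMemClass.coe_one, Units.val_one, TruncFreeAlg.coeff_one_of_ne_nil
    (by rw [← List.length_pos_iff, List.length_map, hlen]; omega)] at hcoeff
  exact hprod hcoeff.symm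

end Magnus

/-- Free groups are residually (torsion-free nilpotent). -/
theorem freeGroup_residually_torsionFreeNilpotent
    (α : Type*) (g : FreeGroup α) (hg : g ≠ 1) :
    ∃ (N : Subgroup (FreeGroup α)) (_ : N.Normal),
      g ∉ N ∧ Group.IsNilpotent (FreeGroup α ⧸ N) ∧
        Monoid.IsTorsionFree (FreeGroup α ⧸ N) := by
  classical
  set μ := magnusHom α (2 * g.toWord.length)
  refine ⟨μ.ker, μ.normal_ker, fun hμ => magnusHom_ne_one hg (μ.mem_ker.mp hμ), ?_, ?_⟩
  · exact Group.nilpotent_of_mulEquiv (QuotientGroup.quotientKerEquivRange μ).symm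
  · exact (isTorsionFree_truncFiltration_unitsLevel_one _ _).of_injective _
      (QuotientGroup.kerLift_injective μ)
end

section
/- Every residually-(torsion-free nilpotent) group is orderable: if G is a group such that for every nontrivial g ∈ G there exists a normal subgroup N of G with g ∉ N and G/N torsion-free nilpotent, then there exists a subset P ⊆ G such that {P, P⁻¹} is a partition of G \ {1} (i.e. every nontrivial element lies in exactly one of P and P⁻¹ = {x⁻¹ : x ∈ P}), P·P ⊆ P, and gPg⁻¹ ⊆ P for every g ∈ G. -/
/-!
A torsion-free nilpotent group `G` is ordered by induction on its nilpotency class. Its centre `Z`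
is torsion-free abelian, and a maximal submonoid of `Z` containing no pair `x, x⁻¹` with `x ≠ 1`
(Zorn) contains `x` or `x⁻¹` for every `x`, hence orders `Z`. The quotient `G ⧸ Z` is again
torsion-free (Mal'cev): modulo `Z_i` a commutator `⁅x, y⁆ ∈ Z_{i+1}` is central, so
`⁅x, y⁆ ^ n ≡ ⁅x ^ n, y⁆`, which lets one descend the upper central series. The cones on `Z` and
`G ⧸ Z` combine lexicographically.

For a residually torsion-free nilpotent group, well-order the family of quotients `G ⧸ N_i` that
separate the points, and call `g` positive when its image is positive in the first quotient in
which it is nontrivial.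
-/

open QuotientGroup
open scoped commutatorElement

structure IsPosCone {G : Type*} [Group G] (P : Set G) : Prop where
  one_notMem : (1 : G) ∉ P
  mem_iff_inv_notMem : ∀ g : G, g ≠ 1 → (g ∈ P ↔ g⁻¹ ∉ P)
  mul_mem : ∀ x ∈ P, ∀ y ∈ P, x * y ∈ P
  conj_mem : ∀ g : G, ∀ x ∈ P, g * x * g⁻¹ ∈ P

namespace IsPosCone

variable {G : Type*} [Group G] {P : Set G}

theorem ne_one (hP : IsPosCone P) {g : G} (hg : g ∈ P) : g ≠ 1 :=
  fun h => hP.one_notMem (h ▸ hg)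

theorem empty [Subsingleton G] : IsPosCone (∅ : Set G) where
  one_notMem := id
  mem_iff_inv_notMem g hg := absurd (Subsingleton.elim g 1) hg
  mul_mem _ hx := hx.elim
  conj_mem _ _ hx := hx.elim

end IsPosCone

def Submonoid.IsPointed {G : Type*} [Group G] (M : Submonoid G) : Prop :=
  ∀ x ∈ M, x⁻¹ ∈ M → x = 1

theorem isPosCone_diff_one {G : Type*} [Group G] {M : Submonoid G} (hM : M.IsPointed)
    (htotal : ∀ g, g ∈ M ∨ g⁻¹ ∈ M) (hconj : ∀ g, ∀ x ∈ M, g * x * g⁻¹ ∈ M) :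
    IsPosCone ((M : Set G) \ {1}) where
  one_notMem h := h.2 rfl
  mem_iff_inv_notMem g hg := by
    refine ⟨fun h h' => hg (hM g h.1 h'.1), fun h => ⟨?_, hg⟩⟩
    exact (htotal g).resolve_right fun hinv => h ⟨hinv, inv_ne_one.2 hg⟩
  mul_mem x hx y hy := by
    refine ⟨M.mul_mem hx.1 hy.1, fun hxy => hx.2 (hM x hx.1 ?_)⟩
    rw [inv_eq_of_mul_eq_one_right hxy]
    exact hy.1
  conj_mem g x hx := ⟨hconj g x hx.1, by simpa using hx.2⟩

theorem exists_maximal_isPointed (G : Type*) [Group G] :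
    ∃ M : Submonoid G, Maximal Submonoid.IsPointed M := by
  have hchain : ∀ c ⊆ {M : Submonoid G | M.IsPointed}, IsChain (· ≤ ·) c →
      ∀ M₀ ∈ c, ∃ ub ∈ {M : Submonoid G | M.IsPointed}, ∀ M ∈ c, M ≤ ub := by
    intro c hcP hc M₀ hM₀
    refine ⟨sSup c, fun x hx hx' => ?_, fun _ => le_sSup⟩
    rw [Submonoid.mem_sSup_of_directedOn ⟨M₀, hM₀⟩ hc.directedOn] at hx hx'
    obtain ⟨M₁, hM₁, hxM₁⟩ := hx
    obtain ⟨M₂, hM₂, hxM₂⟩ := hx'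
    rcases hc.total hM₁ hM₂ with h | h
    · exact hcP hM₂ x (h hxM₁) hxM₂
    · exact hcP hM₁ x hxM₁ (h hxM₂)
  obtain ⟨M, -, hM⟩ := zorn_le_nonempty₀ _ hchain ⊥ fun x hx _ => Submonoid.mem_bot.1 hx
  exact ⟨M, hM⟩

section CommGroup

variable {A : Type*} [CommGroup A] {M : Submonoid A}

/-- Adjoining `h` to a maximal pointed submonoid `M` creates some `x ≠ 1` with `x, x⁻¹` in
`M ⊔ closure {h}`; writing `x = m * h ^ a` and `x⁻¹ = m' * h ^ b` gives
`(h ^ (a + b))⁻¹ = m * m'`. -/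
theorem exists_inv_pow_mem_of_maximal_isPointed (hM : Maximal Submonoid.IsPointed M) {h : A}
    (hh : h ∉ M) : ∃ n ≠ 0, (h ^ n)⁻¹ ∈ M := by
  have hlt : M < M ⊔ Submonoid.closure {h} :=
    lt_of_le_of_ne le_sup_left fun e =>
      hh (e ▸ Submonoid.mem_sup_right (Submonoid.subset_closure rfl))
  obtain ⟨x, hx, hx', hx1⟩ : ∃ x ∈ M ⊔ Submonoid.closure {h},
      x⁻¹ ∈ M ⊔ Submonoid.closure {h} ∧ x ≠ 1 := by
    by_contra! hpointed
    exact hlt.not_ge (hM.2 (fun x hx hx' => hpointed x hx hx') hlt.le)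
  obtain ⟨m, hm, _, ha, rfl⟩ := Submonoid.mem_sup.1 hx
  obtain ⟨a, rfl⟩ := Submonoid.mem_closure_singleton.1 ha
  obtain ⟨m', hm', _, hb, hx'⟩ := Submonoid.mem_sup.1 hx'
  obtain ⟨b, rfl⟩ := Submonoid.mem_closure_singleton.1 hb
  have hprod : m * m' = (h ^ (a + b))⁻¹ := by
    rw [eq_inv_iff_mul_eq_one, pow_add, mul_mul_mul_comm, hx', mul_inv_cancel]
  refine ⟨a + b, fun hab => hx1 ?_, hprod ▸ M.mul_mem hm hm'⟩
  obtain ⟨rfl, rfl⟩ : a = 0 ∧ b = 0 := by omega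
  rw [pow_zero, inv_one, ← eq_inv_iff_mul_eq_one] at hprod
  rw [pow_zero, mul_one]
  exact hM.1 m hm (by rwa [hprod, inv_inv])

theorem Maximal.mem_or_inv_mem_of_isPointed (htf : ∀ a : A, a ≠ 1 → ¬IsOfFinOrder a)
    (hM : Maximal Submonoid.IsPointed M) (g : A) : g ∈ M ∨ g⁻¹ ∈ M := by
  by_contra! ⟨hg, hg'⟩
  obtain ⟨a, ha, hga⟩ := exists_inv_pow_mem_of_maximal_isPointed hM hg
  obtain ⟨b, hb, hgb⟩ := exists_inv_pow_mem_of_maximal_isPointed hM hg'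
  rw [inv_pow, inv_inv] at hgb
  have hpow : g ^ (a * b) = 1 := by
    refine hM.1 _ ?_ ?_
    · rw [mul_comm, pow_mul]; exact pow_mem hgb a
    · rw [pow_mul, ← inv_pow]; exact pow_mem hga b
  have hg1 : g ≠ 1 := fun h => hg (h ▸ M.one_mem)
  exact htf g hg1 (isOfFinOrder_iff_pow_eq_one.2 ⟨a * b, by positivity, hpow⟩)

theorem exists_isPosCone_of_commGroup (htf : ∀ a : A, a ≠ 1 → ¬IsOfFinOrder a) :
    ∃ P : Set A, IsPosCone P := by
  obtain ⟨M, hM⟩ := exists_maximal_isPointed A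
  exact ⟨_, isPosCone_diff_one hM.1 (hM.mem_or_inv_mem_of_isPointed htf)
    fun g x hx => by rwa [mul_inv_cancel_comm]⟩

end CommGroup

theorem IsPosCone.lex_center {G : Type*} [Group G] {P₀ : Set (Subgroup.center G)}
    (h₀ : IsPosCone P₀) {P₁ : Set (G ⧸ Subgroup.center G)} (h₁ : IsPosCone P₁) :
    IsPosCone ((QuotientGroup.mk ⁻¹' P₁) ∪ (Subtype.val '' P₀)) := by
  have mem_of_mem_center {g : G} (hg : g ∈ Subgroup.center G) :
      g ∈ (QuotientGroup.mk ⁻¹' P₁) ∪ (Subtype.val '' P₀) ↔ ⟨g, hg⟩ ∈ P₀ := by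
    simp [(QuotientGroup.eq_one_iff g).2 hg, h₁.one_notMem, hg]
  have mem_of_notMem_center {g : G} (hg : g ∉ Subgroup.center G) :
      g ∈ (QuotientGroup.mk ⁻¹' P₁) ∪ (Subtype.val '' P₀) ↔ (g : G ⧸ Subgroup.center G) ∈ P₁ := by
    simp [hg]
  constructor
  · exact (mem_of_mem_center (one_mem _)).not.2 h₀.one_notMem
  · intro g hg
    by_cases hgZ : g ∈ Subgroup.center G
    · rw [mem_of_mem_center hgZ, mem_of_mem_center (inv_mem hgZ)]
      exact h₀.mem_iff_inv_notMem ⟨g, hgZ⟩ (by simpa using hg)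
    · rw [mem_of_notMem_center hgZ, mem_of_notMem_center (by simpa using hgZ), mk_inv]
      exact h₁.mem_iff_inv_notMem _ (by simpa using hgZ)
  · rintro x (hx | ⟨x, hx, rfl⟩) y (hy | ⟨y, hy, rfl⟩)
    · exact .inl (h₁.mul_mem _ hx _ hy)
    · exact .inl (by simpa [(QuotientGroup.eq_one_iff _).2 y.2] using hx)
    · exact .inl (by simpa [(QuotientGroup.eq_one_iff _).2 x.2] using hy)
    · exact .inr ⟨x * y, h₀.mul_mem _ hx _ hy, rfl⟩
  · rintro g x (hx | ⟨x, hx, rfl⟩)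
    · rw [Set.mem_union, Set.mem_preimage, mk_mul, mk_mul, mk_inv]
      exact .inl (h₁.conj_mem _ _ hx)
    · exact .inr ⟨x, hx, by rw [Subgroup.mem_center_iff.1 x.2 g, mul_inv_cancel_right]⟩

theorem commutatorElement_pow_left_of_commute {G : Type*} [Group G] {a b : G}
    (h : Commute a ⁅a, b⁆) (n : ℕ) : ⁅a ^ n, b⁆ = ⁅a, b⁆ ^ n := by
  induction n with
  | zero => simp
  | succ n ih =>
    calc ⁅a ^ (n + 1), b⁆ = a * ⁅a ^ n, b⁆ * a⁻¹ * ⁅a, b⁆ := by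
          simp only [commutatorElement_def]; group
      _ = ⁅a, b⁆ ^ (n + 1) := by rw [ih, (h.pow_right n).eq, mul_inv_cancel_right, pow_succ]

namespace Subgroup

variable {G : Type*} [Group G]

theorem commutatorElement_pow_left_mem_iff {H : Subgroup G} [H.Normal] {x y : G}
    (h : ⁅x, y⁆ ∈ upperCentralSeriesStep H) (n : ℕ) : ⁅x ^ n, y⁆ ∈ H ↔ ⁅x, y⁆ ^ n ∈ H := by
  rw [upperCentralSeriesStep_eq_comap_center, mem_comap] at h
  have hcomm : Commute (mk' H x) ⁅mk' H x, mk' H y⁆ :=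
    (mem_center_iff.1 (map_commutatorElement (mk' H) x y ▸ h) (mk' H x))
  rw [← QuotientGroup.eq_one_iff, ← QuotientGroup.eq_one_iff (⁅x, y⁆ ^ n)]
  have himage := commutatorElement_pow_left_of_commute hcomm n
  rw [← map_commutatorElement, ← map_pow, ← map_pow, ← map_commutatorElement] at himage
  exact iff_of_eq (congrArg (· = 1) himage)

variable (htf : ∀ g : G, g ≠ 1 → ¬IsOfFinOrder g) {n : ℕ} (hn : n ≠ 0)
include htf hn

theorem mem_upperCentralSeries_of_pow_mem_of_mem_succ :
    ∀ (i : ℕ) {x : G}, x ∈ upperCentralSeries G (i + 1) → x ^ n ∈ upperCentralSeries G i →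
      x ∈ upperCentralSeries G i
  | 0, x, _, hxn => by
    rw [upperCentralSeries_zero, mem_bot] at hxn ⊢
    by_contra hx
    exact htf x hx (isOfFinOrder_iff_pow_eq_one.2 ⟨n, Nat.pos_of_ne_zero hn, hxn⟩)
  | i + 1, x, hx, hxn => fun y =>
    mem_upperCentralSeries_of_pow_mem_of_mem_succ i (hx y)
      ((commutatorElement_pow_left_mem_iff (H := upperCentralSeries G i) (hx y) n).1 (hxn y))

theorem mem_upperCentralSeries_of_pow_mem [Group.IsNilpotent G] (i : ℕ) {x : G}
    (hxn : x ^ n ∈ upperCentralSeries G i) : x ∈ upperCentralSeries G i := by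
  suffices descend : ∀ k, x ∈ upperCentralSeries G (i + k) → x ∈ upperCentralSeries G i by
    refine descend (Group.nilpotencyClass G) ?_
    rw [upperCentralSeries_eq_top_iff_nilpotencyClass_le.2 (Nat.le_add_left _ i)]
    exact mem_top x
  intro k
  induction k with
  | zero => exact id
  | succ k ih =>
    exact fun hx => ih (mem_upperCentralSeries_of_pow_mem_of_mem_succ htf hn (i + k) hx
      (upperCentralSeries_mono G (Nat.le_add_right i k) hxn))

omit hn

theorem not_isOfFinOrder_quotient_center [Group.IsNilpotent G] (q : G ⧸ center G) (hq : q ≠ 1) :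
    ¬IsOfFinOrder q := by
  induction q using QuotientGroup.induction_on with
  | H x =>
    intro hfin
    obtain ⟨n, hn, hxn⟩ := isOfFinOrder_iff_pow_eq_one.1 hfin
    rw [← mk_pow, QuotientGroup.eq_one_iff, ← upperCentralSeries_one] at hxn
    rw [Ne, QuotientGroup.eq_one_iff, ← upperCentralSeries_one] at hq
    exact hq (mem_upperCentralSeries_of_pow_mem htf hn.ne' 1 hxn)

end Subgroup

open scoped IsMulCommutative in
theorem exists_isPosCone_of_isNilpotent {G : Type*} [Group G] [Group.IsNilpotent G]
    (htf : ∀ g : G, g ≠ 1 → ¬IsOfFinOrder g) : ∃ P : Set G, IsPosCone P := by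
  refine Group.nilpotent_center_quotient_ind
    (P := fun G _ _ => (∀ g : G, g ≠ 1 → ¬IsOfFinOrder g) → ∃ P : Set G, IsPosCone P) G
    (fun _ _ _ _ => ⟨∅, IsPosCone.empty⟩) (fun G _ _ ih htf => ?_) htf
  obtain ⟨P₁, h₁⟩ := ih (Subgroup.not_isOfFinOrder_quotient_center htf)
  obtain ⟨P₀, h₀⟩ := exists_isPosCone_of_commGroup (A := Subgroup.center G) fun x hx hfin =>
    htf x (by simpa using hx) (Submonoid.isOfFinOrder_coe.2 hfin)
  exact ⟨_, h₀.lex_center h₁⟩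

section Residual

variable {G : Type*} [Group G] {ι : Type*} [LinearOrder ι]
  (N : ι → Subgroup G) [∀ i, (N i).Normal] (C : ∀ i, Set (G ⧸ N i))

/-- With each `C i` a cone, `x ∈ lexCone N C` iff the image of `x` is positive in the first
quotient `G ⧸ N i` in which it is nontrivial. -/
def lexCone : Set G :=
  {x | ∃ i, (∀ j < i, x ∈ N j) ∧ (x : G ⧸ N i) ∈ C i}

variable {N C}

theorem mem_lexCone_iff (hC : ∀ i, IsPosCone (C i)) {x : G} {i : ι} (hxi : x ∉ N i)
    (hlt : ∀ j < i, x ∈ N j) : x ∈ lexCone N C ↔ (x : G ⧸ N i) ∈ C i := by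
  refine ⟨fun ⟨k, hk, hxk⟩ => ?_, fun h => ⟨i, hlt, h⟩⟩
  obtain rfl : k = i := by
    rcases lt_trichotomy k i with h | h | h
    · exact absurd ((QuotientGroup.eq_one_iff x).2 (hlt k h)) ((hC k).ne_one hxk)
    · exact h
    · exact absurd (hk i h) hxi
  exact hxk

theorem isPosCone_lexCone [WellFoundedLT ι] (hsep : ∀ g : G, g ≠ 1 → ∃ i, g ∉ N i)
    (hC : ∀ i, IsPosCone (C i)) : IsPosCone (lexCone N C) where
  one_notMem := fun ⟨i, _, h⟩ => (hC i).one_notMem h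
  mem_iff_inv_notMem g hg := by
    obtain ⟨i, hi, hmin⟩ := wellFounded_lt.has_min {i | g ∉ N i} (hsep g hg)
    have hlt : ∀ j < i, g ∈ N j := fun j hj => by_contra fun h => hmin j h hj
    rw [mem_lexCone_iff hC hi hlt, mem_lexCone_iff hC (by simpa using hi)
      fun j hj => inv_mem (hlt j hj), mk_inv]
    exact (hC i).mem_iff_inv_notMem _ (by simpa using hi)
  mul_mem := by
    rintro x ⟨i, hxi, hx⟩ y ⟨j, hyj, hy⟩
    rcases lt_trichotomy i j with hij | rfl | hji
    · refine ⟨i, fun k hk => mul_mem (hxi k hk) (hyj k (hk.trans hij)), ?_⟩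
      rwa [mk_mul, (QuotientGroup.eq_one_iff y).2 (hyj i hij), mul_one]
    · exact ⟨i, fun k hk => mul_mem (hxi k hk) (hyj k hk), (hC i).mul_mem _ hx _ hy⟩
    · refine ⟨j, fun k hk => mul_mem (hxi k (hk.trans hji)) (hyj k hk), ?_⟩
      rwa [mk_mul, (QuotientGroup.eq_one_iff x).2 (hxi j hji), one_mul]
  conj_mem := by
    rintro g x ⟨i, hxi, hx⟩
    exact ⟨i, fun j hj => Subgroup.Normal.conj_mem inferInstance x (hxi j hj) g,
      (hC i).conj_mem (g : G ⧸ N i) _ hx⟩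

end Residual

theorem exists_isPosCone_of_residual {G : Type*} [Group G]
    (hres : ∀ g : G, g ≠ 1 → ∃ (N : Subgroup G) (_ : N.Normal), g ∉ N ∧
      ∃ P : Set (G ⧸ N), IsPosCone P) :
    ∃ P : Set G, IsPosCone P := by
  choose N hN hgN C hC using fun g : {g : G // g ≠ 1} => hres g g.2
  obtain ⟨_, _⟩ := exists_wellFoundedLT {g : G // g ≠ 1}
  exact ⟨lexCone N C, isPosCone_lexCone (fun g hg => ⟨⟨g, hg⟩, hgN _⟩) hC⟩

/-- Residually (torsion-free nilpotent) groups are orderable: they admit a positive cone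
`P`, i.e. a subset such that `{P, P⁻¹}` partitions `G \ {1}`, `P · P ⊆ P` and `P` is
invariant under conjugation. -/
theorem residuallyTorsionFreeNilpotent_orderable
    (G : Type*) [Group G]
    (hres : ∀ g : G, g ≠ 1 → ∃ (N : Subgroup G) (_ : N.Normal),
      g ∉ N ∧ Group.IsNilpotent (G ⧸ N) ∧ (∀ q : G ⧸ N, q ≠ 1 → ¬IsOfFinOrder q)) :
    ∃ P : Set G,
      (1 : G) ∉ P ∧
      (∀ g : G, g ≠ 1 → (g ∈ P ↔ g⁻¹ ∉ P)) ∧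
      (∀ x ∈ P, ∀ y ∈ P, x * y ∈ P) ∧
      (∀ g : G, ∀ x ∈ P, g * x * g⁻¹ ∈ P) := by
  obtain ⟨P, hP⟩ := exists_isPosCone_of_residual fun g hg => by
    obtain ⟨N, hN, hgN, hnil, htf⟩ := hres g hg
    exact ⟨N, hN, hgN, exists_isPosCone_of_isNilpotent htf⟩
  exact ⟨P, hP.one_notMem, hP.mem_iff_inv_notMem, hP.mul_mem, hP.conj_mem⟩
end

section
/- Let R be a right Noetherian domain, i.e. a nontrivial (not necessarily commutative) ring without zero divisors in which every ascending chain of right ideals stabilizes. Then the set of nonzero elements of R satisfies the right Ore condition: for every a ∈ R and every nonzero s ∈ R, there exist t, r ∈ R with t ≠ 0 and a·t = s·r. -/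
/-- A right Noetherian domain satisfies the right Ore condition: for every `a` and every
nonzero `s`, there are `t ≠ 0` and `r` with `a * t = s * r`. Right Noetherianity is
expressed as (left) Noetherianity of the opposite ring. -/
theorem rightNoetherian_domain_ore
    (R : Type*) [Ring R] [Nontrivial R] [NoZeroDivisors R]
    [IsNoetherianRing Rᵐᵒᵖ] :
    ∀ (a s : R), s ≠ 0 → ∃ t r : R, t ≠ 0 ∧ a * t = s * r := by
  intro a s hs
  have : IsDomain R := NoZeroDivisors.to_isDomain R
  -- The right Ore condition for `R` is the left one for `Rᵐᵒᵖ`, a Noetherian domain and hence one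
  -- with the strong rank condition; a domain failing left Ore contains the free family
  -- `a * s ^ i`, so has infinite rank over itself.
  obtain ⟨r, t, h⟩ := OreLocalization.nonempty_oreSet_iff_of_noZeroDivisors.mp
    (nonempty_oreSet_of_strongRankCondition (R := Rᵐᵒᵖ)) (.op a)
    ⟨.op s, mem_nonZeroDivisors_of_ne_zero (MulOpposite.op_ne_zero_iff s |>.mpr hs)⟩
  exact ⟨t.1.unop, r.unop, by simp, congrArg MulOpposite.unop h⟩
end
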